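/- arXiv:1405.5198 — 3 statements merged into one kernel-verified Lean document; each statement's English description precedes it below -/
import Mathlib

section
/- Equip ℝ⁴ with the Minkowski bilinear form ⟨x, y⟩ = x₁y₁ + x₂y₂ + x₃y₃ − x₄y₄, and let H³ = {x ∈ ℝ⁴ : ⟨x, x⟩ = −1, x₄ > 0} be the hyperboloid model of hyperbolic 3-space. Let U ⊆ ℝ² be a nonempty open connected set, x : U → ℝ⁴ a smooth immersion with x(p) ∈ H³ for all p, and n : U → ℝ⁴ smooth with ⟨n(p), n(p)⟩ = 1, ⟨n(p), x(p)⟩ = 0, and ⟨n(p), Dx_p(v)⟩ = 0 for all p ∈ U, v ∈ ℝ² (a unit normal field tangent to H³). Suppose there exist constants a ≠ c and smooth maps v₁, v₂ : U → ℝ² with v₁(p), v₂(p) linearly independent for every p, such that Dn_p(v₁(p)) = −a • Dx_p(v₁(p)) and Dn_p(v₂(p)) = −c • Dx_p(v₂(p)) for all p ∈ U. Then a·c − 1 = 0, and there exist a linear map A of ℝ⁴ preserving the Minkowski form ⟨·,·⟩ and a real number r with 0 < r < 1 such that, with b = √(1 − r²), for every p ∈ U, (A(x(p)))₁² + (A(x(p)))₂²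 = r²/b² and (A(x(p)))₃² − (A(x(p)))₄² = −1/b²; that is, up to a Minkowski isometry, x(U) lies on the circular hyperboloid S¹(r/b) × H¹(1/b) ⊂ H³. -/
open scoped RealInnerProductSpace

/-- The Minkowski bilinear form on `ℝ⁴ = ℝ^{3,1}`. -/
def mink (x y : EuclideanSpace ℝ (Fin 4)) : ℝ :=
  x 0 * y 0 + x 1 * y 1 + x 2 * y 2 - x 3 * y 3

namespace IsoparametricH3

local notation "E2" => EuclideanSpace ℝ (Fin 2)
local notation "E4" => EuclideanSpace ℝ (Fin 4)

lemma mink_comm (u v : E4) : mink u v = mink v u := by simp [mink]; ring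
lemma mink_add_left (u w v : E4) : mink (u + w) v = mink u v + mink w v := by
  simp [mink]; ring
lemma mink_sub_left (u w v : E4) : mink (u - w) v = mink u v - mink w v := by
  simp [mink]; ring
lemma mink_smul_left (r : ℝ) (u v : E4) : mink (r • u) v = r * mink u v := by
  simp [mink]; ring
lemma mink_add_right (u w v : E4) : mink v (u + w) = mink v u + mink v w := by
  simp [mink]; ring
lemma mink_smul_right (r : ℝ) (u v : E4) : mink v (r • u) = r * mink v u := by
  simp [mink]; ring
lemma mink_zero_right (v : E4) : mink v 0 = 0 := by simp [mink]
lemma mink_neg_left (u v : E4) : mink (-u) v = -mink u v := by simp [mink]; ring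

/-- The Minkowski form as a continuous linear map in the second argument. -/
noncomputable def minkL (u : E4) : E4 →L[ℝ] ℝ :=
  u 0 • EuclideanSpace.proj (0 : Fin 4) + u 1 • EuclideanSpace.proj (1 : Fin 4)
    + u 2 • EuclideanSpace.proj (2 : Fin 4) - u 3 • EuclideanSpace.proj (3 : Fin 4)

@[simp] lemma minkL_apply (u v : E4) : minkL u v = mink u v := by
  simp [minkL, mink]

lemma hasFDerivAt_mink {f g : E2 → E4} {f' g' : E2 →L[ℝ] E4} {p : E2}
    (hf : HasFDerivAt f f' p) (hg : HasFDerivAt g g' p) :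
    HasFDerivAt (fun q => mink (f q) (g q)) ((minkL (g p)).comp f' + (minkL (f p)).comp g') p := by
  have hco : ∀ (i : Fin 4), HasFDerivAt (fun q => f q i) ((EuclideanSpace.proj i).comp f') p :=
    fun i => by exact (EuclideanSpace.proj i).hasFDerivAt.comp p hf
  have hco' : ∀ (i : Fin 4), HasFDerivAt (fun q => g q i) ((EuclideanSpace.proj i).comp g') p :=
    fun i => by exact (EuclideanSpace.proj i).hasFDerivAt.comp p hg
  have h := ((((hco 0).mul (hco' 0)).add ((hco 1).mul (hco' 1))).add
      ((hco 2).mul (hco' 2))).sub ((hco 3).mul (hco' 3))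
  have heq : (f p 0 • (EuclideanSpace.proj (0:Fin 4)).comp g' + g p 0 • (EuclideanSpace.proj (0:Fin 4)).comp f' +
          (f p 1 • (EuclideanSpace.proj (1:Fin 4)).comp g' + g p 1 • (EuclideanSpace.proj (1:Fin 4)).comp f') +
        (f p 2 • (EuclideanSpace.proj (2:Fin 4)).comp g' + g p 2 • (EuclideanSpace.proj (2:Fin 4)).comp f') -
      (f p 3 • (EuclideanSpace.proj (3:Fin 4)).comp g' + g p 3 • (EuclideanSpace.proj (3:Fin 4)).comp f'))
      = (minkL (g p)).comp f' + (minkL (f p)).comp g' := by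
    ext e; simp [minkL]; ring
  rw [show (fun q => mink (f q) (g q))
      = (fun q => f q 0 * g q 0 + f q 1 * g q 1 + f q 2 * g q 2 - f q 3 * g q 3) from rfl]
  rw [← heq]
  exact h

/-- Derivative identity extracted from the constancy of a `mink` product. -/
lemma mink_const_deriv {U : Set E2} (hU : IsOpen U) {p : E2} (hp : p ∈ U)
    {f g : E2 → E4} {f' g' : E2 →L[ℝ] E4} (hf : HasFDerivAt f f' p) (hg : HasFDerivAt g g' p)
    {k : ℝ} (h : ∀ q ∈ U, mink (f q) (g q) = k) :
    ∀ e, mink (f' e) (g p) + mink (f p) (g' e) = 0 := by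
  intro e
  have h0 : HasFDerivAt (fun q => mink (f q) (g q)) (0 : E2 →L[ℝ] ℝ) p := by
    have : (fun q => mink (f q) (g q)) =ᶠ[nhds p] (fun _ => k) :=
      Filter.eventuallyEq_of_mem (hU.mem_nhds hp) h
    exact (hasFDerivAt_const k p).congr_of_eventuallyEq this
  have := (hasFDerivAt_mink hf hg).unique h0
  have := congrArg (fun (L : E2 →L[ℝ] ℝ) => L e) this
  simp only [ContinuousLinearMap.add_apply, ContinuousLinearMap.comp_apply, minkL_apply,
    ContinuousLinearMap.zero_apply] at this
  rw [mink_comm (g p) (f' e)] at this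
  exact this

lemma tangent_spacelike_aux {X0 X1 X2 X3 ξ0 ξ1 ξ2 ξ3 : ℝ}
    (hX : X0 * X0 + X1 * X1 + X2 * X2 - X3 * X3 = -1) (hX3 : 0 < X3)
    (hξ : ξ0 * X0 + ξ1 * X1 + ξ2 * X2 - ξ3 * X3 = 0)
    (hS : 0 < ξ0 ^ 2 + ξ1 ^ 2 + ξ2 ^ 2) :
    0 < ξ0 * ξ0 + ξ1 * ξ1 + ξ2 * ξ2 - ξ3 * ξ3 := by
  have hcs : (ξ0 * X0 + ξ1 * X1 + ξ2 * X2) ^ 2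
      ≤ (ξ0 ^ 2 + ξ1 ^ 2 + ξ2 ^ 2) * (X0 ^ 2 + X1 ^ 2 + X2 ^ 2) := by
    nlinarith [sq_nonneg (ξ0 * X1 - ξ1 * X0), sq_nonneg (ξ0 * X2 - ξ2 * X0),
      sq_nonneg (ξ1 * X2 - ξ2 * X1)]
  have h2 : ξ3 * X3 = ξ0 * X0 + ξ1 * X1 + ξ2 * X2 := by linarith
  have h3 : (ξ3 * X3) ^ 2 ≤ (ξ0 ^ 2 + ξ1 ^ 2 + ξ2 ^ 2) * (X3 ^ 2 - 1) := by
    rw [h2]; nlinarith [hcs]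
  nlinarith [mul_pos hX3 hX3, hS, h3]

/-- A nonzero Minkowski-orthogonal vector to a point of `H³` is spacelike. -/
lemma tangent_spacelike {X ξ : E4} (hX : mink X X = -1) (hX3 : 0 < X 3)
    (hξ : mink ξ X = 0) (hne : ξ ≠ 0) : 0 < mink ξ ξ := by
  rw [mink] at hX hξ ⊢
  rcases eq_or_ne (ξ 0) 0 with h0 | h0
  · rcases eq_or_ne (ξ 1) 0 with h1 | h1
    · rcases eq_or_ne (ξ 2) 0 with h2 | h2
      · exfalso
        have h3 : ξ 3 = 0 := by
          rw [h0, h1, h2] at hξ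
          have hX3' : X 3 ≠ 0 := ne_of_gt hX3
          have : ξ 3 * X 3 = 0 := by linarith
          exact (mul_eq_zero.mp this).resolve_right hX3'
        apply hne
        ext i
        fin_cases i <;> simp_all
      · exact tangent_spacelike_aux hX hX3 hξ (by positivity)
    · exact tangent_spacelike_aux hX hX3 hξ (by positivity)
  · exact tangent_spacelike_aux hX hX3 hξ (by positivity)

lemma mink_nondeg {u : E4} (h : ∀ w, mink u w = 0) : u = 0 := by
  ext i
  fin_cases i
  · simpa [mink, EuclideanSpace.single_apply] using h (EuclideanSpace.single 0 1)
  · simpa [mink, EuclideanSpace.single_apply] using h (EuclideanSpace.single 1 1)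
  · simpa [mink, EuclideanSpace.single_apply] using h (EuclideanSpace.single 2 1)
  · have := h (EuclideanSpace.single 3 1)
    simp [mink, EuclideanSpace.single_apply] at this
    simpa using this

/-- Expansion of a vector in a pseudo-orthonormal basis of signature `(+,+,+,-)`. -/
lemma mink_expansion {f₀ f₁ f₂ f₃ : E4}
    (h00 : mink f₀ f₀ = 1) (h11 : mink f₁ f₁ = 1) (h22 : mink f₂ f₂ = 1) (h33 : mink f₃ f₃ = -1)
    (h01 : mink f₀ f₁ = 0) (h02 : mink f₀ f₂ = 0) (h03 : mink f₀ f₃ = 0)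
    (h12 : mink f₁ f₂ = 0) (h13 : mink f₁ f₃ = 0) (h23 : mink f₂ f₃ = 0) (u : E4) :
    u = mink u f₀ • f₀ + mink u f₁ • f₁ + mink u f₂ • f₂ - mink u f₃ • f₃ := by
  have hsym : ∀ y z : E4, mink y z = mink z y := fun y z => mink_comm y z
  set F : Fin 4 → E4 := ![f₀, f₁, f₂, f₃] with hF
  have li : LinearIndependent ℝ F := by
    rw [Fintype.linearIndependent_iff]
    intro g hg
    have hzero : g 0 • f₀ + g 1 • f₁ + g 2 • f₂ + g 3 • f₃ = 0 := by
      rw [Fin.sum_univ_four] at hg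
      simpa [hF] using hg
    have key : ∀ w : E4, g 0 * mink f₀ w + g 1 * mink f₁ w + g 2 * mink f₂ w
        + g 3 * mink f₃ w = 0 := by
      intro w
      rw [← mink_smul_left, ← mink_smul_left, ← mink_smul_left, ← mink_smul_left,
        ← mink_add_left, ← mink_add_left, ← mink_add_left, hzero, hsym, mink_zero_right]
    have e0 : g 0 = 0 := by
      have := key f₀; rw [h00, hsym f₁ f₀, h01, hsym f₂ f₀, h02, hsym f₃ f₀, h03] at this; linarith
    have e1 : g 1 = 0 := by
      have := key f₁; rw [h01, h11, hsym f₂ f₁, h12, hsym f₃ f₁, h13] at this; linarith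
    have e2 : g 2 = 0 := by
      have := key f₂; rw [h02, h12, h22, hsym f₃ f₂, h23] at this; linarith
    have e3 : g 3 = 0 := by
      have := key f₃; rw [h03, h13, h23, h33] at this; linarith
    intro i
    fin_cases i
    · exact e0
    · exact e1
    · exact e2
    · exact e3
  have hspan : Submodule.span ℝ (Set.range F) = ⊤ :=
    li.span_eq_top_of_card_eq_finrank (by simp [finrank_euclideanSpace_fin])
  set r : E4 := u - (mink u f₀ • f₀ + mink u f₁ • f₁ + mink u f₂ • f₂ - mink u f₃ • f₃) with hr
  have expand : ∀ w : E4, mink r w = mink u w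
      - (mink u f₀ * mink f₀ w + mink u f₁ * mink f₁ w + mink u f₂ * mink f₂ w
        - mink u f₃ * mink f₃ w) := by
    intro w
    rw [hr, mink_sub_left, mink_sub_left, mink_add_left, mink_add_left, mink_smul_left,
      mink_smul_left, mink_smul_left, mink_smul_left]
  have hrf0 : mink r f₀ = 0 := by
    rw [expand f₀, h00, hsym f₁ f₀, h01, hsym f₂ f₀, h02, hsym f₃ f₀, h03]; ring
  have hrf1 : mink r f₁ = 0 := by
    rw [expand f₁, h01, h11, hsym f₂ f₁, h12, hsym f₃ f₁, h13]; ring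
  have hrf2 : mink r f₂ = 0 := by
    rw [expand f₂, h02, h12, h22, hsym f₃ f₂, h23]; ring
  have hrf3 : mink r f₃ = 0 := by
    rw [expand f₃, h03, h13, h23, h33]; ring
  have hrf : ∀ i : Fin 4, mink r (F i) = 0 := by
    intro i
    fin_cases i
    · exact hrf0
    · exact hrf1
    · exact hrf2
    · exact hrf3
  have hall : ∀ w : E4, mink r w = 0 := by
    intro w
    have hw : w ∈ Submodule.span ℝ (Set.range F) := by rw [hspan]; trivial
    induction hw using Submodule.span_induction with
    | mem w hw => obtain ⟨i, rfl⟩ := hw; exact hrf i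
    | zero => exact mink_zero_right r
    | add y z _ _ hy hz => rw [mink_add_right, hy, hz]; ring
    | smul t y _ hy => rw [mink_smul_right, hy]; ring
  exact (sub_eq_zero.mp (mink_nondeg hall))

lemma mink_sub_right (u w v : E4) : mink v (u - w) = mink v u - mink v w := by
  simp [mink]; ring

/-- `mink` against a fixed vector, as a linear map. -/
noncomputable def minkLM (f : E4) : E4 →ₗ[ℝ] ℝ where
  toFun u := mink u f
  map_add' u v := mink_add_left u v f
  map_smul' r u := mink_smul_left r u f

@[simp] lemma minkLM_apply (f u : E4) : minkLM f u = mink u f := rfl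

/-- The isometry built from a pseudo-orthonormal basis. -/
noncomputable def buildA (f₀ f₁ f₂ f₃ : E4) : E4 →ₗ[ℝ] E4 :=
  (WithLp.linearEquiv 2 ℝ (Fin 4 → ℝ)).symm.toLinearMap.comp
    (LinearMap.pi (fun i => ![minkLM f₀, minkLM f₁, minkLM f₂, -(minkLM f₃)] i))

@[simp] lemma buildA_apply0 (f₀ f₁ f₂ f₃ u : E4) : buildA f₀ f₁ f₂ f₃ u 0 = mink u f₀ := rfl
@[simp] lemma buildA_apply1 (f₀ f₁ f₂ f₃ u : E4) : buildA f₀ f₁ f₂ f₃ u 1 = mink u f₁ := rfl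
@[simp] lemma buildA_apply2 (f₀ f₁ f₂ f₃ u : E4) : buildA f₀ f₁ f₂ f₃ u 2 = mink u f₂ := rfl
@[simp] lemma buildA_apply3 (f₀ f₁ f₂ f₃ u : E4) : buildA f₀ f₁ f₂ f₃ u 3 = -(mink u f₃) := rfl

/-- `buildA` preserves `mink` whenever `(f₀,f₁,f₂,f₃)` is pseudo-orthonormal of
signature `(+,+,+,-)`. -/
lemma buildA_preserves {f₀ f₁ f₂ f₃ : E4}
    (h00 : mink f₀ f₀ = 1) (h11 : mink f₁ f₁ = 1) (h22 : mink f₂ f₂ = 1) (h33 : mink f₃ f₃ = -1)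
    (h01 : mink f₀ f₁ = 0) (h02 : mink f₀ f₂ = 0) (h03 : mink f₀ f₃ = 0)
    (h12 : mink f₁ f₂ = 0) (h13 : mink f₁ f₃ = 0) (h23 : mink f₂ f₃ = 0) (u v : E4) :
    mink (buildA f₀ f₁ f₂ f₃ u) (buildA f₀ f₁ f₂ f₃ v) = mink u v := by
  have hexp := mink_expansion h00 h11 h22 h33 h01 h02 h03 h12 h13 h23 v
  have : mink u v = mink u (mink v f₀ • f₀ + mink v f₁ • f₁ + mink v f₂ • f₂
      - mink v f₃ • f₃) := by rw [← hexp]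
  rw [this, mink_sub_right, mink_add_right, mink_add_right, mink_smul_right, mink_smul_right,
    mink_smul_right, mink_smul_right]
  show buildA f₀ f₁ f₂ f₃ u 0 * buildA f₀ f₁ f₂ f₃ v 0
      + buildA f₀ f₁ f₂ f₃ u 1 * buildA f₀ f₁ f₂ f₃ v 1
      + buildA f₀ f₁ f₂ f₃ u 2 * buildA f₀ f₁ f₂ f₃ v 2
      - buildA f₀ f₁ f₂ f₃ u 3 * buildA f₀ f₁ f₂ f₃ v 3 = _
  simp only [buildA_apply0, buildA_apply1, buildA_apply2, buildA_apply3]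
  ring

/-- Constancy from vanishing derivative on an open connected set. -/
lemma const_of_fderiv_zero {U : Set E2} (hU : IsOpen U) (hconn : IsPreconnected U)
    {F : E2 → ℝ} (hF : ∀ p ∈ U, HasFDerivAt F (0 : E2 →L[ℝ] ℝ) p) {p q : E2}
    (hp : p ∈ U) (hq : q ∈ U) :
    F p = F q := by
  have hloc : ∀ z ∈ U, ∃ ε > 0, Metric.ball z ε ⊆ U ∧ ∀ y ∈ Metric.ball z ε, F y = F z := by
    intro z hz
    obtain ⟨ε, hε, hball⟩ := Metric.isOpen_iff.mp hU z hz
    refine ⟨ε, hε, hball, fun y hy => ?_⟩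
    refine (convex_ball z ε).is_const_of_fderivWithin_eq_zero
      (fun w hw => ((hF w (hball hw)).differentiableAt).differentiableWithinAt) ?_ hy
      (Metric.mem_ball_self hε)
    intro w hw
    rw [fderivWithin_of_isOpen Metric.isOpen_ball hw]
    exact (hF w (hball hw)).fderiv
  set S := {z : E2 | z ∈ U ∧ F z = F p} with hS
  set T := {z : E2 | z ∈ U ∧ F z ≠ F p} with hT
  have hSopen : IsOpen S := by
    rw [Metric.isOpen_iff]
    intro z hz
    obtain ⟨ε, hε, hsub, hconst⟩ := hloc z hz.1
    exact ⟨ε, hε, fun y hy => ⟨hsub hy, by rw [hconst y hy, hz.2]⟩⟩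
  have hTopen : IsOpen T := by
    rw [Metric.isOpen_iff]
    intro z hz
    obtain ⟨ε, hε, hsub, hconst⟩ := hloc z hz.1
    exact ⟨ε, hε, fun y hy => ⟨hsub hy, by rw [hconst y hy]; exact hz.2⟩⟩
  have hsub : U ⊆ S ∪ T := fun z hz => by
    by_cases h : F z = F p
    · exact Or.inl ⟨hz, h⟩
    · exact Or.inr ⟨hz, h⟩
  have hdisj : Disjoint S T := by
    rw [Set.disjoint_iff]
    rintro z ⟨⟨-, h1⟩, ⟨-, h2⟩⟩
    exact absurd h1 h2
  have : U ⊆ S :=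
    hconn.subset_left_of_subset_union hSopen hTopen hdisj hsub ⟨p, hp, ⟨hp, rfl⟩⟩
  exact ((this hq).2).symm

/-! ### The geometric setup -/

/-- Tangent field associated to a direction field. -/
noncomputable def Xf (x : E2 → E4) (v : E2 → E2) : E2 → E4 := fun p => fderiv ℝ x p (v p)

/-- Determinant of the frame `(v₁, v₂)`. -/
noncomputable def del (v₁ v₂ : E2 → E2) : E2 → ℝ := fun p =>
  v₁ p 0 * v₂ p 1 - v₁ p 1 * v₂ p 0

/-- First dual-frame coefficient: `e = tau v₁ v₂ p e • v₁ p + tau v₂ v₁ p e • v₂ p`. -/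
noncomputable def tau (v₁ v₂ : E2 → E2) (p : E2) (e : E2) : ℝ :=
  (e 0 * v₂ p 1 - e 1 * v₂ p 0) / del v₁ v₂ p

lemma del_swap (v₁ v₂ : E2 → E2) (p : E2) : del v₂ v₁ p = -del v₁ v₂ p := by
  simp [del]; ring

/-- The parallel-type map `x + a • n`. -/
noncomputable def zmap (x n : E2 → E4) (a : ℝ) : E2 → E4 := fun p => x p + a • n p

/-- All hypotheses of the theorem, bundled. -/
structure Setup (U : Set E2) (x n : E2 → E4) (v₁ v₂ : E2 → E2) (a c : ℝ) : Prop where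
  hUopen : IsOpen U
  hx : ContDiffOn ℝ (⊤ : ℕ∞) x U
  hn : ContDiffOn ℝ (⊤ : ℕ∞) n U
  hv₁ : ContDiffOn ℝ (⊤ : ℕ∞) v₁ U
  hv₂ : ContDiffOn ℝ (⊤ : ℕ∞) v₂ U
  hhyp : ∀ p ∈ U, mink (x p) (x p) = -1
  hpos : ∀ p ∈ U, 0 < x p 3
  himm : ∀ p ∈ U, Function.Injective (fderiv ℝ x p)
  hunit : ∀ p ∈ U, mink (n p) (n p) = 1
  htang : ∀ p ∈ U, mink (n p) (x p) = 0
  hnormal : ∀ p ∈ U, ∀ v, mink (n p) (fderiv ℝ x p v) = 0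
  hac : a ≠ c
  hindep : ∀ p ∈ U, LinearIndependent ℝ ![v₁ p, v₂ p]
  hW₁ : ∀ p ∈ U, fderiv ℝ n p (v₁ p) = (-a) • fderiv ℝ x p (v₁ p)
  hW₂ : ∀ p ∈ U, fderiv ℝ n p (v₂ p) = (-c) • fderiv ℝ x p (v₂ p)

namespace Setup

variable {U : Set E2} {x n : E2 → E4} {v₁ v₂ : E2 → E2} {a c : ℝ}

lemma symm (S : Setup U x n v₁ v₂ a c) : Setup U x n v₂ v₁ c a := by
  refine ⟨S.hUopen, S.hx, S.hn, S.hv₂, S.hv₁, S.hhyp, S.hpos, S.himm, S.hunit, S.htang,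
    S.hnormal, S.hac.symm, fun p hp => ?_, S.hW₂, S.hW₁⟩
  have h := S.hindep p hp
  rw [LinearIndependent.pair_iff] at h ⊢
  intro s t hst
  have := h t s (by rw [← hst]; abel)
  exact ⟨this.2, this.1⟩


variable {p : E2}

/-- Differentiability accessor. -/
lemma hasAt {F : Type*} [NormedAddCommGroup F] [NormedSpace ℝ F] {U : Set E2} (hU : IsOpen U)
    {f : E2 → F} (hf : ContDiffOn ℝ (⊤ : ℕ∞) f U) {p : E2} (hp : p ∈ U) :
    HasFDerivAt f (fderiv ℝ f p) p :=
  ((hf.contDiffAt (hU.mem_nhds hp)).differentiableAt (by simp)).hasFDerivAt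

variable (S : Setup U x n v₁ v₂ a c)
include S

lemma hasx (hp : p ∈ U) : HasFDerivAt x (fderiv ℝ x p) p := hasAt S.hUopen S.hx hp
lemma hasn (hp : p ∈ U) : HasFDerivAt n (fderiv ℝ n p) p := hasAt S.hUopen S.hn hp

lemma cDx : ContDiffOn ℝ (⊤ : ℕ∞) (fderiv ℝ x) U := S.hx.fderiv_of_isOpen S.hUopen (by simp)
lemma cDn : ContDiffOn ℝ (⊤ : ℕ∞) (fderiv ℝ n) U := S.hn.fderiv_of_isOpen S.hUopen (by simp)
lemma cX1 : ContDiffOn ℝ (⊤ : ℕ∞) (Xf x v₁) U := S.cDx.clm_apply S.hv₁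
lemma hasX1 (hp : p ∈ U) : HasFDerivAt (Xf x v₁) (fderiv ℝ (Xf x v₁) p) p :=
  hasAt S.hUopen S.cX1 hp

/-- Derivative of `q ↦ (fderiv x q) v` for a fixed vector `v`. -/
lemma hasDxv (hp : p ∈ U) (v : E2) :
    HasFDerivAt (fun q => fderiv ℝ x q v)
      ((fderiv ℝ (fderiv ℝ x) p).flip v) p := by
  have h := (hasAt S.hUopen S.cDx hp).clm_apply (hasFDerivAt_const v p)
  simpa using h

lemma hasDnv (hp : p ∈ U) (v : E2) :
    HasFDerivAt (fun q => fderiv ℝ n q v)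
      ((fderiv ℝ (fderiv ℝ n) p).flip v) p := by
  have h := (hasAt S.hUopen S.cDn hp).clm_apply (hasFDerivAt_const v p)
  simpa using h

/-- Symmetry of the second derivative of `x`. -/
lemma xsymm (hp : p ∈ U) (v w : E2) :
    fderiv ℝ (fderiv ℝ x) p v w = fderiv ℝ (fderiv ℝ x) p w v := by
  have hev : ∀ᶠ q in nhds p, HasFDerivAt x (fderiv ℝ x q) q := by
    filter_upwards [S.hUopen.mem_nhds hp] with q hq
    exact S.hasx hq
  exact second_derivative_symmetric_of_eventually hev (hasAt S.hUopen S.cDx hp) v w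

lemma nsymm (hp : p ∈ U) (v w : E2) :
    fderiv ℝ (fderiv ℝ n) p v w = fderiv ℝ (fderiv ℝ n) p w v := by
  have hev : ∀ᶠ q in nhds p, HasFDerivAt n (fderiv ℝ n q) q := by
    filter_upwards [S.hUopen.mem_nhds hp] with q hq
    exact S.hasn hq
  exact second_derivative_symmetric_of_eventually hev (hasAt S.hUopen S.cDn hp) v w

omit S in
lemma E2_ext {u w : E2} (h0 : u 0 = w 0) (h1 : u 1 = w 1) : u = w := by
  ext i
  fin_cases i
  · exact h0
  · exact h1

lemma delne (hp : p ∈ U) : del v₁ v₂ p ≠ 0 := by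
  intro h
  have hli := (LinearIndependent.pair_iff).mp (S.hindep p hp)
  simp only [del] at h
  have hc : ∀ s t : ℝ, (s • v₁ p + t • v₂ p : E2) 0 = s * v₁ p 0 + t * v₂ p 0 ∧
      (s • v₁ p + t • v₂ p : E2) 1 = s * v₁ p 1 + t * v₂ p 1 := by
    intro s t
    constructor <;> simp
  have h1 : (v₂ p 1) • (v₁ p) + (-(v₁ p 1)) • (v₂ p) = 0 := by
    refine E2_ext ?_ ?_
    · rw [(hc _ _).1]; simp only [PiLp.zero_apply]; linarith
    · rw [(hc _ _).2]; simp only [PiLp.zero_apply]; ring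
  obtain ⟨e1, e2⟩ := hli _ _ h1
  have e2' : v₁ p 1 = 0 := by simpa using e2
  have h2 : (v₂ p 0) • (v₁ p) + (-(v₁ p 0)) • (v₂ p) = 0 := by
    refine E2_ext ?_ ?_
    · rw [(hc _ _).1]; simp only [PiLp.zero_apply]; ring
    · rw [(hc _ _).2]; simp only [PiLp.zero_apply]; rw [e1, e2']; ring
  obtain ⟨e3, e4⟩ := hli _ _ h2
  have e4' : v₁ p 0 = 0 := by simpa using e4
  have hv0 : v₁ p = 0 := by
    refine E2_ext ?_ ?_ <;> simp [e4', e2']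
  obtain ⟨bad, -⟩ := hli 1 0 (by rw [hv0]; simp)
  exact one_ne_zero bad

lemma tau_basis (hp : p ∈ U) (e : E2) :
    e = tau v₁ v₂ p e • v₁ p + tau v₂ v₁ p e • v₂ p := by
  have hδ := S.delne hp
  have hd : del v₁ v₂ p = v₁ p 0 * v₂ p 1 - v₁ p 1 * v₂ p 0 := rfl
  refine E2_ext ?_ ?_ <;>
    · simp only [tau, del_swap v₁ v₂ p, PiLp.add_apply, PiLp.smul_apply, smul_eq_mul, div_neg]
      rw [hd] at hδ ⊢
      set D := v₁ p 0 * v₂ p 1 - v₁ p 1 * v₂ p 0 with hD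
      field_simp
      rw [hD]
      ring
lemma tau_self (hp : p ∈ U) : tau v₁ v₂ p (v₁ p) = 1 := by
  have hδ := S.delne hp
  simp only [tau]
  rw [show v₁ p 0 * v₂ p 1 - v₁ p 1 * v₂ p 0 = del v₁ v₂ p from rfl]
  exact div_self hδ

omit S in
lemma tau_other (p : E2) : tau v₁ v₂ p (v₂ p) = 0 := by
  simp only [tau]
  rw [show v₂ p 0 * v₂ p 1 - v₂ p 1 * v₂ p 0 = 0 by ring, zero_div]

lemma Dx_eq (hp : p ∈ U) (e : E2) :
    fderiv ℝ x p e = tau v₁ v₂ p e • Xf x v₁ p + tau v₂ v₁ p e • Xf x v₂ p := by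
  conv_lhs => rw [S.tau_basis hp e]
  rw [map_add, map_smul, map_smul]
  rfl

lemma Dn_eq (hp : p ∈ U) (e : E2) :
    fderiv ℝ n p e = (-(a * tau v₁ v₂ p e)) • Xf x v₁ p
      + (-(c * tau v₂ v₁ p e)) • Xf x v₂ p := by
  conv_lhs => rw [S.tau_basis hp e]
  rw [map_add, map_smul, map_smul, S.hW₁ p hp, S.hW₂ p hp, smul_smul, smul_smul]
  rw [show tau v₁ v₂ p e * -a = -(a * tau v₁ v₂ p e) by ring,
    show tau v₂ v₁ p e * -c = -(c * tau v₂ v₁ p e) by ring]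
  rfl


lemma mDx_x (hp : p ∈ U) (e : E2) : mink (fderiv ℝ x p e) (x p) = 0 := by
  have h := mink_const_deriv S.hUopen hp (S.hasx hp) (S.hasx hp) S.hhyp e
  have hc := mink_comm (x p) (fderiv ℝ x p e)
  linarith

lemma mX1_x (hp : p ∈ U) : mink (Xf x v₁ p) (x p) = 0 := S.mDx_x hp (v₁ p)

lemma mX1_n (hp : p ∈ U) : mink (Xf x v₁ p) (n p) = 0 := by
  have := S.hnormal p hp (v₁ p)
  rw [mink_comm]
  exact this

lemma mDn_x (hp : p ∈ U) (e : E2) : mink (fderiv ℝ n p e) (x p) = 0 := by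
  have h := mink_const_deriv S.hUopen hp (S.hasn hp) (S.hasx hp) S.htang e
  have := S.hnormal p hp e
  linarith

/-- Second-derivative identity: `⟨Dn e, Dx v⟩ + ⟨n, x''(e,v)⟩ = 0`. -/
lemma snd_identity (hp : p ∈ U) (v e : E2) :
    mink (fderiv ℝ n p e) (fderiv ℝ x p v)
      + mink (n p) (fderiv ℝ (fderiv ℝ x) p e v) = 0 := by
  have h := mink_const_deriv S.hUopen hp (S.hasn hp) (S.hasDxv hp v) (k := 0)
    (fun q hq => S.hnormal q hq v) e
  simpa using h

/-- Orthogonality of the two principal directions. -/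
lemma g12 (hp : p ∈ U) : mink (Xf x v₁ p) (Xf x v₂ p) = 0 := by
  have h1 := S.snd_identity hp (v₁ p) (v₂ p)
  have h2 := S.snd_identity hp (v₂ p) (v₁ p)
  rw [show fderiv ℝ n p (v₂ p) = (-c) • fderiv ℝ x p (v₂ p) from S.hW₂ p hp,
    S.xsymm hp (v₂ p) (v₁ p), mink_smul_left] at h1
  rw [show fderiv ℝ n p (v₁ p) = (-a) • fderiv ℝ x p (v₁ p) from S.hW₁ p hp,
    mink_smul_left] at h2
  have hcm : mink (fderiv ℝ x p (v₂ p)) (fderiv ℝ x p (v₁ p))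
      = mink (fderiv ℝ x p (v₁ p)) (fderiv ℝ x p (v₂ p)) := mink_comm _ _
  have key : (a - c) * mink (fderiv ℝ x p (v₁ p)) (fderiv ℝ x p (v₂ p)) = 0 := by
    rw [hcm] at h1
    nlinarith [h1, h2]
  have hac' : a - c ≠ 0 := sub_ne_zero.mpr S.hac
  have := mul_eq_zero.mp key
  exact (this.resolve_left hac')

lemma v₁ne (hp : p ∈ U) : v₁ p ≠ 0 := by
  have h := (S.hindep p hp).ne_zero 0
  simpa using h

lemma X1ne (hp : p ∈ U) : Xf x v₁ p ≠ 0 := by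
  intro h
  apply S.v₁ne hp
  apply S.himm p hp
  rw [map_zero]
  exact h

lemma g1pos (hp : p ∈ U) : 0 < mink (Xf x v₁ p) (Xf x v₁ p) :=
  tangent_spacelike (S.hhyp p hp) (S.hpos p hp) (S.mX1_x hp) (S.X1ne hp)


lemma hasX2 (hp : p ∈ U) : HasFDerivAt (Xf x v₂) (fderiv ℝ (Xf x v₂) p) p :=
  S.symm.hasX1 hp

lemma difftau (hp : p ∈ U) (v : E2) : DifferentiableAt ℝ (fun q => tau v₁ v₂ q v) p := by
  have hvc : ∀ (w : E2 → E2), ContDiffOn ℝ (⊤ : ℕ∞) w U → ∀ i : Fin 2,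
      DifferentiableAt ℝ (fun q => w q i) p := by
    intro w hw i
    have h := ((EuclideanSpace.proj i).differentiableAt).comp p
      ((hasAt S.hUopen hw hp).differentiableAt)
    exact h
  have h10 := hvc v₁ S.hv₁ 0
  have h11 := hvc v₁ S.hv₁ 1
  have h20 := hvc v₂ S.hv₂ 0
  have h21 := hvc v₂ S.hv₂ 1
  have hnum : DifferentiableAt ℝ (fun q => v 0 * v₂ q 1 - v 1 * v₂ q 0) p :=
    (h21.const_mul (v 0)).sub (h20.const_mul (v 1))
  have hden : DifferentiableAt ℝ (fun q => del v₁ v₂ q) p := by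
    simp only [del]
    exact (h10.mul h21).sub (h11.mul h20)
  have hinv : DifferentiableAt ℝ (fun q => (del v₁ v₂ q)⁻¹) p :=
    DifferentiableAt.inv hden (S.delne hp)
  have h := hnum.mul hinv
  simp only [tau, div_eq_mul_inv]
  exact h

/-- The key combination appearing in the Codazzi computation. -/
lemma combo (hp : p ∈ U) (v e : E2) :
    mink (fderiv ℝ (fderiv ℝ n) p e v) (Xf x v₂ p)
      + c * mink (fderiv ℝ (fderiv ℝ x) p e v) (Xf x v₂ p)
    = (c - a) * (tau v₁ v₂ p v
        * mink (fderiv ℝ (Xf x v₁) p e) (Xf x v₂ p)) := by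
  classical
  set α : E2 → ℝ := fun q => tau v₁ v₂ q v with hα
  set β : E2 → ℝ := fun q => tau v₂ v₁ q v with hβ
  have hαd : DifferentiableAt ℝ α p := S.difftau hp v
  have hβd : DifferentiableAt ℝ β p := S.symm.difftau hp v
  set Dα := fderiv ℝ α p with hDα
  set Dβ := fderiv ℝ β p with hDβ
  set X₁ := Xf x v₁ with hX₁
  set X₂ := Xf x v₂ with hX₂
  set DX₁ := fderiv ℝ (Xf x v₁) p with hDX₁
  set DX₂ := fderiv ℝ (Xf x v₂) p with hDX₂
  -- derivative of q ↦ fderiv x q v via the frame decomposition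
  have hxR : HasFDerivAt (fun q => α q • X₁ q + β q • X₂ q)
      ((α p • DX₁ + Dα.smulRight (X₁ p)) + (β p • DX₂ + Dβ.smulRight (X₂ p))) p :=
    (hαd.hasFDerivAt.smul (S.hasX1 hp)).add (hβd.hasFDerivAt.smul (S.hasX2 hp))
  have hxL : HasFDerivAt (fun q => fderiv ℝ x q v)
      ((α p • DX₁ + Dα.smulRight (X₁ p)) + (β p • DX₂ + Dβ.smulRight (X₂ p))) p := by
    refine hxR.congr_of_eventuallyEq ?_
    filter_upwards [S.hUopen.mem_nhds hp] with q hq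
    exact S.Dx_eq hq v
  have hxeq := (S.hasDxv hp v).unique hxL
  -- derivative of q ↦ fderiv n q v via the frame decomposition
  have hα'd : HasFDerivAt (fun q => -(a * α q)) (-(a • Dα)) p := by
    exact (hαd.hasFDerivAt.const_mul a).neg
  have hβ'd : HasFDerivAt (fun q => -(c * β q)) (-(c • Dβ)) p := by
    exact (hβd.hasFDerivAt.const_mul c).neg
  have hnR : HasFDerivAt (fun q => (-(a * α q)) • X₁ q + (-(c * β q)) • X₂ q)
      (((-(a * α p)) • DX₁ + (-(a • Dα)).smulRight (X₁ p))
        + ((-(c * β p)) • DX₂ + (-(c • Dβ)).smulRight (X₂ p))) p :=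
    (hα'd.smul (S.hasX1 hp)).add (hβ'd.smul (S.hasX2 hp))
  have hnL : HasFDerivAt (fun q => fderiv ℝ n q v)
      (((-(a * α p)) • DX₁ + (-(a • Dα)).smulRight (X₁ p))
        + ((-(c * β p)) • DX₂ + (-(c • Dβ)).smulRight (X₂ p))) p := by
    refine hnR.congr_of_eventuallyEq ?_
    filter_upwards [S.hUopen.mem_nhds hp] with q hq
    exact S.Dn_eq hq v
  have hneq := (S.hasDnv hp v).unique hnL
  -- apply both CLM identities to `e` and take `mink` with `X₂ p`
  have hxe : fderiv ℝ (fderiv ℝ x) p e v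
      = α p • DX₁ e + Dα e • X₁ p + (β p • DX₂ e + Dβ e • X₂ p) := by
    have := congrArg (fun (L : E2 →L[ℝ] E4) => L e) hxeq
    simpa [ContinuousLinearMap.smulRight_apply] using this
  have hne : fderiv ℝ (fderiv ℝ n) p e v
      = (-(a * α p)) • DX₁ e + (-(a * Dα e)) • X₁ p
        + ((-(c * β p)) • DX₂ e + (-(c * Dβ e)) • X₂ p) := by
    have := congrArg (fun (L : E2 →L[ℝ] E4) => L e) hneq
    simpa [ContinuousLinearMap.smulRight_apply] using this
  have hg12 : mink (X₁ p) (X₂ p) = 0 := S.g12 hp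
  rw [hxe, hne]
  simp only [mink_add_left, mink_smul_left]
  rw [hg12]
  ring

lemma codazzi_B2 (hp : p ∈ U) :
    mink (fderiv ℝ (Xf x v₁) p (v₂ p)) (Xf x v₂ p) = 0 := by
  have h1 := S.combo hp (v₂ p) (v₁ p)
  have h2 := S.combo hp (v₁ p) (v₂ p)
  rw [S.xsymm hp (v₁ p) (v₂ p), S.nsymm hp (v₁ p) (v₂ p)] at h1
  rw [h1, tau_other p, S.tau_self hp] at h2
  have hca : c - a ≠ 0 := sub_ne_zero.mpr (Ne.symm S.hac)
  have := mul_left_cancel₀ hca h2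
  simpa using this.symm

lemma dg12 (hp : p ∈ U) (e : E2) :
    mink (fderiv ℝ (Xf x v₁) p e) (Xf x v₂ p)
      + mink (Xf x v₁ p) (fderiv ℝ (Xf x v₂) p e) = 0 := by
  exact mink_const_deriv S.hUopen hp (S.hasX1 hp) (S.hasX2 hp) (fun q hq => S.g12 hq) e

lemma codazzi_B1 (hp : p ∈ U) :
    mink (fderiv ℝ (Xf x v₁) p (v₁ p)) (Xf x v₂ p) = 0 := by
  have h1 := S.symm.codazzi_B2 hp
  have h2 := S.dg12 hp (v₁ p)
  rw [mink_comm (Xf x v₁ p)] at h2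
  linarith

/-- Codazzi: `⟨DX₁ e, X₂⟩ = 0` for every direction `e`. -/
lemma codazzi (hp : p ∈ U) (e : E2) :
    mink (fderiv ℝ (Xf x v₁) p e) (Xf x v₂ p) = 0 := by
  conv_lhs => rw [S.tau_basis hp e]
  rw [map_add, map_smul, map_smul, mink_add_left, mink_smul_left, mink_smul_left,
    S.codazzi_B1 hp, S.codazzi_B2 hp]
  ring


lemma g2pos (hp : p ∈ U) : 0 < mink (Xf x v₂ p) (Xf x v₂ p) := S.symm.g1pos hp

/-- Expansion of any vector in the adapted frame `(X₁, X₂, n, x)` at a point. -/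
lemma frame_expansion (hp : p ∈ U) (u : E4) :
    u = (mink u (Xf x v₁ p) / mink (Xf x v₁ p) (Xf x v₁ p)) • Xf x v₁ p
      + (mink u (Xf x v₂ p) / mink (Xf x v₂ p) (Xf x v₂ p)) • Xf x v₂ p
      + mink u (n p) • n p - mink u (x p) • x p := by
  have hg1 := S.g1pos hp
  have hg2 := S.g2pos hp
  set g₁ := mink (Xf x v₁ p) (Xf x v₁ p) with hg₁
  set g₂ := mink (Xf x v₂ p) (Xf x v₂ p) with hg₂
  set s₁ : ℝ := (Real.sqrt g₁)⁻¹ with hs₁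
  set s₂ : ℝ := (Real.sqrt g₂)⁻¹ with hs₂
  have hs1 : s₁ * s₁ = g₁⁻¹ := by
    rw [hs₁, ← mul_inv, Real.mul_self_sqrt hg1.le]
  have hs2 : s₂ * s₂ = g₂⁻¹ := by
    rw [hs₂, ← mul_inv, Real.mul_self_sqrt hg2.le]
  have h00 : mink (s₁ • Xf x v₁ p) (s₁ • Xf x v₁ p) = 1 := by
    rw [mink_smul_left, mink_smul_right, ← mul_assoc, hs1, ← hg₁]
    field_simp
  have h11 : mink (s₂ • Xf x v₂ p) (s₂ • Xf x v₂ p) = 1 := by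
    rw [mink_smul_left, mink_smul_right, ← mul_assoc, hs2, ← hg₂]
    field_simp
  have h01 : mink (s₁ • Xf x v₁ p) (s₂ • Xf x v₂ p) = 0 := by
    rw [mink_smul_left, mink_smul_right, S.g12 hp]; ring
  have h02 : mink (s₁ • Xf x v₁ p) (n p) = 0 := by
    rw [mink_smul_left, S.mX1_n hp]; ring
  have h03 : mink (s₁ • Xf x v₁ p) (x p) = 0 := by
    rw [mink_smul_left, S.mX1_x hp]; ring
  have h12 : mink (s₂ • Xf x v₂ p) (n p) = 0 := by
    rw [mink_smul_left, S.symm.mX1_n hp]; ring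
  have h13 : mink (s₂ • Xf x v₂ p) (x p) = 0 := by
    rw [mink_smul_left, S.symm.mX1_x hp]; ring
  have h22 : mink (n p) (n p) = 1 := S.hunit p hp
  have h23 : mink (n p) (x p) = 0 := S.htang p hp
  have h33 : mink (x p) (x p) = -1 := S.hhyp p hp
  have h := mink_expansion h00 h11 h22 h33 h01 h02 h03 h12 h13 h23 u
  rw [mink_smul_right, mink_smul_right] at h
  calc u = (mink u (Xf x v₁ p) * s₁) • s₁ • Xf x v₁ p
        + (mink u (Xf x v₂ p) * s₂) • s₂ • Xf x v₂ p
        + mink u (n p) • n p - mink u (x p) • x p := by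
          rw [show mink u (Xf x v₁ p) * s₁ = s₁ * mink u (Xf x v₁ p) by ring,
            show mink u (Xf x v₂ p) * s₂ = s₂ * mink u (Xf x v₂ p) by ring]
          exact h
    _ = _ := by
          rw [smul_smul, smul_smul]
          congr 2
          · congr 1
            · congr 1
              rw [mul_assoc, hs1, div_eq_mul_inv]
            · congr 1
              rw [mul_assoc, hs2, div_eq_mul_inv]

lemma mDX1_n (hp : p ∈ U) (e : E2) :
    mink (fderiv ℝ (Xf x v₁) p e) (n p)
      = a * (tau v₁ v₂ p e * mink (Xf x v₁ p) (Xf x v₁ p)) := by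
  have h := mink_const_deriv S.hUopen hp (S.hasX1 hp) (S.hasn hp)
    (fun q hq => S.mX1_n hq) e
  rw [S.Dn_eq hp e, mink_add_right, mink_smul_right, mink_smul_right, S.g12 hp] at h
  have := S.g1pos hp
  nlinarith [h]

lemma mDX1_x (hp : p ∈ U) (e : E2) :
    mink (fderiv ℝ (Xf x v₁) p e) (x p)
      = -(tau v₁ v₂ p e * mink (Xf x v₁ p) (Xf x v₁ p)) := by
  have h := mink_const_deriv S.hUopen hp (S.hasX1 hp) (S.hasx hp)
    (fun q hq => S.mX1_x hq) e
  rw [S.Dx_eq hp e, mink_add_right, mink_smul_right, mink_smul_right, S.g12 hp] at h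
  nlinarith [h]

/-- Structure equation for the derivative of the principal tangent field `X₁`. -/
lemma DX1_eq (hp : p ∈ U) (e : E2) :
    fderiv ℝ (Xf x v₁) p e
      = (mink (fderiv ℝ (Xf x v₁) p e) (Xf x v₁ p) / mink (Xf x v₁ p) (Xf x v₁ p))
          • Xf x v₁ p
        + (a * (tau v₁ v₂ p e * mink (Xf x v₁ p) (Xf x v₁ p))) • n p
        + (tau v₁ v₂ p e * mink (Xf x v₁ p) (Xf x v₁ p)) • x p := by
  have h := S.frame_expansion hp (fderiv ℝ (Xf x v₁) p e)
  rw [S.codazzi hp e, S.mDX1_n hp e, S.mDX1_x hp e, zero_div, zero_smul, add_zero,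
    neg_smul, sub_neg_eq_add] at h
  exact h

lemma cDX1 : ContDiffOn ℝ (⊤ : ℕ∞) (fderiv ℝ (Xf x v₁)) U := S.cX1.fderiv_of_isOpen S.hUopen (by simp)

lemma hasDX1v (hp : p ∈ U) (v : E2) :
    HasFDerivAt (fun q => fderiv ℝ (Xf x v₁) q v)
      ((fderiv ℝ (fderiv ℝ (Xf x v₁)) p).flip v) p := by
  have h := (hasAt S.hUopen S.cDX1 hp).clm_apply (hasFDerivAt_const v p)
  simpa using h

lemma X1symm (hp : p ∈ U) (v w : E2) :
    fderiv ℝ (fderiv ℝ (Xf x v₁)) p v w = fderiv ℝ (fderiv ℝ (Xf x v₁)) p w v := by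
  have hev : ∀ᶠ q in nhds p, HasFDerivAt (Xf x v₁) (fderiv ℝ (Xf x v₁) q) q := by
    filter_upwards [S.hUopen.mem_nhds hp] with q hq
    exact S.hasX1 hq
  exact second_derivative_symmetric_of_eventually hev (hasAt S.hUopen S.cDX1 hp) v w

lemma diffg1 (hp : p ∈ U) :
    DifferentiableAt ℝ (fun q => mink (Xf x v₁ q) (Xf x v₁ q)) p :=
  (hasFDerivAt_mink (S.hasX1 hp) (S.hasX1 hp)).differentiableAt

/-- Auxiliary identities for `mink` against `X₂`. -/
lemma mDn_X2 (hp : p ∈ U) (e : E2) :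
    mink (fderiv ℝ n p e) (Xf x v₂ p)
      = -(c * tau v₂ v₁ p e * mink (Xf x v₂ p) (Xf x v₂ p)) := by
  rw [S.Dn_eq hp e]
  simp only [mink_add_left, mink_smul_left]
  rw [S.g12 hp]
  ring

lemma mDx_X2 (hp : p ∈ U) (e : E2) :
    mink (fderiv ℝ x p e) (Xf x v₂ p)
      = tau v₂ v₁ p e * mink (Xf x v₂ p) (Xf x v₂ p) := by
  rw [S.Dx_eq hp e]
  simp only [mink_add_left, mink_smul_left]
  rw [S.g12 hp]
  ring

lemma mn_X2 (hp : p ∈ U) : mink (n p) (Xf x v₂ p) = 0 := by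
  rw [mink_comm]; exact S.symm.mX1_n hp

lemma mx_X2 (hp : p ∈ U) : mink (x p) (Xf x v₂ p) = 0 := by
  rw [mink_comm]; exact S.symm.mX1_x hp

/-- The Gauss equation computation. -/
lemma gauss_key (hp : p ∈ U) (v e : E2) :
    mink (fderiv ℝ (fderiv ℝ (Xf x v₁)) p e v) (Xf x v₂ p)
      = (1 - a * c) * (tau v₁ v₂ p v * mink (Xf x v₁ p) (Xf x v₁ p))
          * (tau v₂ v₁ p e * mink (Xf x v₂ p) (Xf x v₂ p)) := by
  classical
  set κ : E2 → ℝ := fun q =>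
    mink (fderiv ℝ (Xf x v₁) q v) (Xf x v₁ q) / mink (Xf x v₁ q) (Xf x v₁ q) with hκ
  set μ : E2 → ℝ := fun q => tau v₁ v₂ q v * mink (Xf x v₁ q) (Xf x v₁ q) with hμ
  have hκd : DifferentiableAt ℝ κ p := by
    have h1 : DifferentiableAt ℝ (fun q => mink (fderiv ℝ (Xf x v₁) q v) (Xf x v₁ q)) p :=
      (hasFDerivAt_mink (S.hasDX1v hp v) (S.hasX1 hp)).differentiableAt
    have h2 : DifferentiableAt ℝ (fun q => (mink (Xf x v₁ q) (Xf x v₁ q))⁻¹) p :=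
      DifferentiableAt.inv (S.diffg1 hp) (ne_of_gt (S.g1pos hp))
    have h3 := h1.mul h2
    simp only [hκ, div_eq_mul_inv]
    exact h3
  have hμd : DifferentiableAt ℝ μ p := (S.difftau hp v).mul (S.diffg1 hp)
  have hμad : HasFDerivAt (fun q => a * μ q) (a • fderiv ℝ μ p) p :=
    hμd.hasFDerivAt.const_mul a
  have hR : HasFDerivAt (fun q => κ q • Xf x v₁ q + (a * μ q) • n q + μ q • x q)
      (((κ p • fderiv ℝ (Xf x v₁) p + (fderiv ℝ κ p).smulRight (Xf x v₁ p))
        + ((a * μ p) • fderiv ℝ n p + (a • fderiv ℝ μ p).smulRight (n p)))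
        + (μ p • fderiv ℝ x p + (fderiv ℝ μ p).smulRight (x p))) p :=
    ((hκd.hasFDerivAt.smul (S.hasX1 hp)).add (hμad.smul (S.hasn hp))).add
      (hμd.hasFDerivAt.smul (S.hasx hp))
  have hL : HasFDerivAt (fun q => fderiv ℝ (Xf x v₁) q v)
      (((κ p • fderiv ℝ (Xf x v₁) p + (fderiv ℝ κ p).smulRight (Xf x v₁ p))
        + ((a * μ p) • fderiv ℝ n p + (a • fderiv ℝ μ p).smulRight (n p)))
        + (μ p • fderiv ℝ x p + (fderiv ℝ μ p).smulRight (x p))) p := by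
    refine hR.congr_of_eventuallyEq ?_
    filter_upwards [S.hUopen.mem_nhds hp] with q hq
    exact S.DX1_eq hq v
  have heq := (S.hasDX1v hp v).unique hL
  have happ := congrArg (fun (L : E2 →L[ℝ] E4) => L e) heq
  simp only [ContinuousLinearMap.flip_apply, ContinuousLinearMap.add_apply,
    ContinuousLinearMap.coe_smul', Pi.smul_apply, ContinuousLinearMap.smulRight_apply,
    ContinuousLinearMap.smul_apply] at happ
  have hm := congrArg (fun u => mink u (Xf x v₂ p)) happ
  simp only [mink_add_left, mink_smul_left] at hm
  rw [S.codazzi hp e, S.g12 hp, S.mDn_X2 hp e, S.mDx_X2 hp e, S.mn_X2 hp, S.mx_X2 hp] at hm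
  rw [hm, hκ, hμ]
  ring

/-- The Gauss equation forces `a * c = 1`. -/
lemma gauss (hp : p ∈ U) : a * c = 1 := by
  have h1 := S.gauss_key hp (v₁ p) (v₂ p)
  have h2 := S.gauss_key hp (v₂ p) (v₁ p)
  rw [S.X1symm hp (v₁ p) (v₂ p)] at h2
  rw [h2, S.tau_self hp, S.symm.tau_self hp, tau_other p,
    show tau v₂ v₁ p (v₁ p) = 0 from tau_other p] at h1
  have hg1 := S.g1pos hp
  have hg2 := S.g2pos hp
  have : (1 - a * c) * mink (Xf x v₁ p) (Xf x v₁ p) * mink (Xf x v₂ p) (Xf x v₂ p) = 0 := by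
    nlinarith [h1]
  have hprod : (0:ℝ) < mink (Xf x v₁ p) (Xf x v₁ p) * mink (Xf x v₂ p) (Xf x v₂ p) :=
    mul_pos hg1 hg2
  nlinarith [this, hprod]


lemma hasz (hp : p ∈ U) :
    HasFDerivAt (zmap x n a) (fderiv ℝ x p + a • fderiv ℝ n p) p := by
  have h := (S.hasx hp).add ((S.hasn hp).const_smul a)
  exact h

omit S in
lemma mz_expand (u : E4) (q : E2) :
    mink u (zmap x n a q) = mink u (x q) + a * mink u (n q) := by
  simp only [zmap]
  rw [mink_add_right, mink_smul_right]

lemma mx_z (hp : p ∈ U) : mink (x p) (zmap x n a p) = -1 := by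
  rw [mz_expand, S.hhyp p hp, mink_comm (x p) (n p), S.htang p hp]
  ring

lemma mz_z (hp : p ∈ U) : mink (zmap x n a p) (zmap x n a p) = a^2 - 1 := by
  have h1 : mink (n p) (zmap x n a p) = a := by
    rw [mz_expand, S.htang p hp, S.hunit p hp]; ring
  rw [mz_expand, mink_comm (zmap x n a p) (x p), S.mx_z hp,
    mink_comm (zmap x n a p) (n p), h1]
  ring

lemma mX1_z (hp : p ∈ U) : mink (Xf x v₁ p) (zmap x n a p) = 0 := by
  rw [mz_expand, S.mX1_x hp, S.mX1_n hp]
  ring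

/-- Scalar form of the derivative of `z` (uses `a * c = 1`). -/
lemma hDz_scalar (hp : p ∈ U) (hac1 : a * c = 1) (u : E4) (e : E2) :
    mink u ((fderiv ℝ x p + a • fderiv ℝ n p) e)
      = (1 - a^2) * (tau v₁ v₂ p e * mink u (Xf x v₁ p)) := by
  simp only [ContinuousLinearMap.add_apply, ContinuousLinearMap.coe_smul', Pi.smul_apply]
  rw [mink_add_right, mink_smul_right, S.Dx_eq hp e, S.Dn_eq hp e]
  simp only [mink_add_right, mink_smul_right]
  linear_combination (-(tau v₂ v₁ p e * mink u (Xf x v₂ p))) * hac1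

/-- The main conserved quantity: zero derivative. -/
lemma Fzero (hp : p ∈ U) (hac1 : a * c = 1) (ha2 : a^2 - 1 ≠ 0) (u : E4) :
    HasFDerivAt (fun q => mink u (Xf x v₁ q) * mink u (Xf x v₁ q)
        * (mink (Xf x v₁ q) (Xf x v₁ q))⁻¹
      + mink u (zmap x n a q) * mink u (zmap x n a q) * (a^2 - 1)⁻¹)
      (0 : E2 →L[ℝ] ℝ) p := by
  classical
  have hg1 := S.g1pos hp
  -- derivative CLMs
  have hm : HasFDerivAt (fun q => mink u (Xf x v₁ q))
      ((minkL u).comp (fderiv ℝ (Xf x v₁) p)) p := by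
    have h := hasFDerivAt_mink (hasFDerivAt_const u p) (S.hasX1 hp)
    simpa using h
  have hmz : HasFDerivAt (fun q => mink u (zmap x n a q))
      ((minkL u).comp (fderiv ℝ x p + a • fderiv ℝ n p)) p := by
    have h := hasFDerivAt_mink (hasFDerivAt_const u p) (S.hasz hp)
    simpa using h
  have hg : HasFDerivAt (fun q => mink (Xf x v₁ q) (Xf x v₁ q))
      ((minkL (Xf x v₁ p)).comp (fderiv ℝ (Xf x v₁) p)
        + (minkL (Xf x v₁ p)).comp (fderiv ℝ (Xf x v₁) p)) p :=
    hasFDerivAt_mink (S.hasX1 hp) (S.hasX1 hp)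
  have hginvd : DifferentiableAt ℝ (fun q => (mink (Xf x v₁ q) (Xf x v₁ q))⁻¹) p :=
    DifferentiableAt.inv (S.diffg1 hp) (ne_of_gt hg1)
  set Dinv := fderiv ℝ (fun q => (mink (Xf x v₁ q) (Xf x v₁ q))⁻¹) p with hDinv
  have hinv : HasFDerivAt (fun q => (mink (Xf x v₁ q) (Xf x v₁ q))⁻¹) Dinv p :=
    hginvd.hasFDerivAt
  -- identify Dinv
  have hprod : HasFDerivAt
      (fun q => mink (Xf x v₁ q) (Xf x v₁ q) * (mink (Xf x v₁ q) (Xf x v₁ q))⁻¹)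
      (mink (Xf x v₁ p) (Xf x v₁ p) • Dinv
        + (mink (Xf x v₁ p) (Xf x v₁ p))⁻¹
            • ((minkL (Xf x v₁ p)).comp (fderiv ℝ (Xf x v₁) p)
        + (minkL (Xf x v₁ p)).comp (fderiv ℝ (Xf x v₁) p))) p := hg.mul hinv
  have hone : HasFDerivAt
      (fun q => mink (Xf x v₁ q) (Xf x v₁ q) * (mink (Xf x v₁ q) (Xf x v₁ q))⁻¹)
      (0 : E2 →L[ℝ] ℝ) p := by
    have : (fun q => mink (Xf x v₁ q) (Xf x v₁ q) * (mink (Xf x v₁ q) (Xf x v₁ q))⁻¹)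
        =ᶠ[nhds p] (fun _ => 1) := by
      filter_upwards [S.hUopen.mem_nhds hp] with q hq
      exact mul_inv_cancel₀ (ne_of_gt (S.g1pos hq))
    exact (hasFDerivAt_const 1 p).congr_of_eventuallyEq this
  have hDinv_eq := hprod.unique hone
  have hDinv_app : ∀ e, Dinv e
      = -(2 * mink (fderiv ℝ (Xf x v₁) p e) (Xf x v₁ p))
          * ((mink (Xf x v₁ p) (Xf x v₁ p)) * (mink (Xf x v₁ p) (Xf x v₁ p)))⁻¹ := by
    intro e
    have h := congrArg (fun (L : E2 →L[ℝ] ℝ) => L e) hDinv_eq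
    simp only [ContinuousLinearMap.add_apply, ContinuousLinearMap.coe_smul', Pi.smul_apply,
      ContinuousLinearMap.comp_apply, minkL_apply, ContinuousLinearMap.zero_apply,
      smul_eq_mul] at h
    have hgne : mink (Xf x v₁ p) (Xf x v₁ p) ≠ 0 := ne_of_gt hg1
    rw [mink_comm (Xf x v₁ p) ((fderiv ℝ (Xf x v₁) p) e)] at h
    field_simp at h ⊢
    ring_nf at h ⊢
    linarith [h]
  -- total derivative
  have htot := ((hm.mul hm).mul hinv).add ((hmz.mul hmz).mul_const ((a^2 - 1)⁻¹))
  refine htot.congr_fderiv ?_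
  symm
  ext e
  simp only [ContinuousLinearMap.add_apply, ContinuousLinearMap.coe_smul', Pi.smul_apply,
    ContinuousLinearMap.comp_apply, minkL_apply, ContinuousLinearMap.smulRight_apply,
    ContinuousLinearMap.zero_apply, smul_eq_mul, Pi.mul_apply]
  rw [hDinv_app e]
  -- scalar identities
  have hM : mink u (fderiv ℝ (Xf x v₁) p e)
      = (mink (fderiv ℝ (Xf x v₁) p e) (Xf x v₁ p) / mink (Xf x v₁ p) (Xf x v₁ p))
          * mink u (Xf x v₁ p)
        + (a * (tau v₁ v₂ p e * mink (Xf x v₁ p) (Xf x v₁ p))) * mink u (n p)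
        + (tau v₁ v₂ p e * mink (Xf x v₁ p) (Xf x v₁ p)) * mink u (x p) := by
    have h := congrArg (fun w => mink u w) (S.DX1_eq hp e)
    simpa only [mink_add_right, mink_smul_right] using h
  have hMz := S.hDz_scalar hp hac1 u e
  simp only [ContinuousLinearMap.add_apply, ContinuousLinearMap.coe_smul', Pi.smul_apply] at hMz
  have hzp := mz_expand (x := x) (n := n) (a := a) u p
  set σ := mink (fderiv ℝ (Xf x v₁) p e) (Xf x v₁ p)
  set g := mink (Xf x v₁ p) (Xf x v₁ p)
  set t1 := tau v₁ v₂ p e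
  set m1 := mink u (Xf x v₁ p)
  set mn := mink u (n p)
  set mx := mink u (x p)
  have hgne : g ≠ 0 := ne_of_gt hg1
  rw [hM, hMz, hzp]
  field_simp
  ring


lemma Fconst (hconn : IsPreconnected U) (hac1 : a * c = 1) (ha2 : a^2 - 1 ≠ 0) (u : E4)
    {q q' : E2} (hq : q ∈ U) (hq' : q' ∈ U) :
    mink u (Xf x v₁ q) * mink u (Xf x v₁ q) * (mink (Xf x v₁ q) (Xf x v₁ q))⁻¹
      + mink u (zmap x n a q) * mink u (zmap x n a q) * (a^2 - 1)⁻¹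
    = mink u (Xf x v₁ q') * mink u (Xf x v₁ q') * (mink (Xf x v₁ q') (Xf x v₁ q'))⁻¹
      + mink u (zmap x n a q') * mink u (zmap x n a q') * (a^2 - 1)⁻¹ :=
  const_of_fderiv_zero S.hUopen hconn (fun r hr => S.Fzero hr hac1 ha2 u) hq hq'

lemma Fval (hp : p ∈ U) :
    mink (x p) (Xf x v₁ p) * mink (x p) (Xf x v₁ p) * (mink (Xf x v₁ p) (Xf x v₁ p))⁻¹
      + mink (x p) (zmap x n a p) * mink (x p) (zmap x n a p) * (a^2 - 1)⁻¹
    = (a^2 - 1)⁻¹ := by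
  have h1 : mink (x p) (Xf x v₁ p) = 0 := by rw [mink_comm]; exact S.mX1_x hp
  rw [h1, S.mx_z hp]
  ring

/-- The main construction, assuming WLOG `1 < a²`. -/
lemma main (hconn : IsPreconnected U) (hUne : U.Nonempty) (hac1 : a * c = 1)
    (ha : 1 < a^2) :
    ∃ (A : E4 →ₗ[ℝ] E4), (∀ u v, mink (A u) (A v) = mink u v) ∧
      ∃ r : ℝ, 0 < r ∧ r < 1 ∧ ∀ p ∈ U,
        (A (x p) 0)^2 + (A (x p) 1)^2 = r^2 / Real.sqrt (1 - r^2)^2 ∧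
        (A (x p) 2)^2 - (A (x p) 3)^2 = -(1 / Real.sqrt (1 - r^2)^2) := by
  classical
  obtain ⟨p₀, hp₀⟩ := hUne
  have ha0 : a ≠ 0 := by intro h; rw [h] at hac1; simp at hac1
  have hca1 : c * a = 1 := by rw [mul_comm]; exact hac1
  have hc : c = a⁻¹ := eq_inv_of_mul_eq_one_right hac1
  have ha2pos : 0 < a^2 - 1 := by nlinarith
  have ha2 : a^2 - 1 ≠ 0 := ne_of_gt ha2pos
  have hc2 : c^2 < 1 := by
    rw [hc, inv_pow]
    have h2 : (0:ℝ) < a^2 := by positivity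
    rw [inv_lt_one_iff₀]
    right; linarith
  have hc2' : c^2 - 1 ≠ 0 := by nlinarith
  have h1c2 : 0 < 1 - c^2 := by nlinarith
  have haabs : 1 < |a| := by nlinarith [sq_abs a, abs_nonneg a]
  have h0abs : 0 < |a| := by linarith
  have hrpos : 0 < |a|⁻¹ := by positivity
  have hrlt1 : |a|⁻¹ < 1 := by rw [inv_lt_one_iff₀]; right; exact haabs
  have hr2 : (|a|⁻¹)^2 = (a^2)⁻¹ := by rw [inv_pow, sq_abs]
  have hA2 : (0:ℝ) < a^2 := by positivity
  have hinvlt : (a^2)⁻¹ < 1 := by rw [inv_lt_one_iff₀]; right; linarith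
  have h1r2pos : 0 < 1 - (|a|⁻¹)^2 := by rw [hr2]; linarith
  have hsq : Real.sqrt (1 - (|a|⁻¹)^2)^2 = 1 - (|a|⁻¹)^2 := Real.sq_sqrt h1r2pos.le
  have hne1 : (1 : ℝ) - (a^2)⁻¹ ≠ 0 := ne_of_gt (by linarith)
  have hcircle : (a^2 - 1)⁻¹ = (a^2)⁻¹ / (1 - (a^2)⁻¹) := by
    rw [eq_div_iff hne1]
    field_simp
  have hhyper : (c^2 - 1)⁻¹ = -(1 / (1 - (a^2)⁻¹)) := by
    rw [hc, inv_pow, show ((a^2)⁻¹ - 1) = -(1 - (a^2)⁻¹) by ring, inv_neg, one_div]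
  have hg1 := S.g1pos hp₀
  have hg2 := S.g2pos hp₀
  have hzz := S.mz_z hp₀
  have hww := S.symm.mz_z hp₀
  set g₁ := mink (Xf x v₁ p₀) (Xf x v₁ p₀) with hg₁def
  set g₂ := mink (Xf x v₂ p₀) (Xf x v₂ p₀) with hg₂def
  set z₀ := zmap x n a p₀ with hz₀def
  set w₀ := zmap x n c p₀ with hw₀def
  set f₀ := (Real.sqrt g₁)⁻¹ • Xf x v₁ p₀ with hf₀def
  set f₁ := (Real.sqrt (a^2 - 1))⁻¹ • z₀ with hf₁def
  set f₂ := (Real.sqrt g₂)⁻¹ • Xf x v₂ p₀ with hf₂def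
  set f₃ := (Real.sqrt (1 - c^2))⁻¹ • w₀ with hf₃def
  have hs0 : (Real.sqrt g₁)⁻¹ * (Real.sqrt g₁)⁻¹ = g₁⁻¹ := by
    rw [← mul_inv, Real.mul_self_sqrt hg1.le]
  have hs1 : (Real.sqrt (a^2 - 1))⁻¹ * (Real.sqrt (a^2 - 1))⁻¹ = (a^2 - 1)⁻¹ := by
    rw [← mul_inv, Real.mul_self_sqrt ha2pos.le]
  have hs2 : (Real.sqrt g₂)⁻¹ * (Real.sqrt g₂)⁻¹ = g₂⁻¹ := by
    rw [← mul_inv, Real.mul_self_sqrt hg2.le]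
  have hs3 : (Real.sqrt (1 - c^2))⁻¹ * (Real.sqrt (1 - c^2))⁻¹ = (1 - c^2)⁻¹ := by
    rw [← mul_inv, Real.mul_self_sqrt h1c2.le]
  -- mink values among the frame vectors at p₀
  have hX1w : mink (Xf x v₁ p₀) w₀ = 0 := by
    rw [hw₀def, mz_expand, S.mX1_x hp₀, S.mX1_n hp₀]; ring
  have hX2z : mink (Xf x v₂ p₀) z₀ = 0 := by
    rw [hz₀def, mz_expand, S.symm.mX1_x hp₀, S.symm.mX1_n hp₀]; ring
  have hnz : mink (n p₀) z₀ = a := by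
    rw [hz₀def, mz_expand, S.htang p₀ hp₀, S.hunit p₀ hp₀]; ring
  have hzw : mink z₀ w₀ = 0 := by
    have hzx : mink z₀ (x p₀) = -1 := by rw [mink_comm]; exact S.mx_z hp₀
    have hzn : mink z₀ (n p₀) = a := by rw [mink_comm]; exact hnz
    rw [hw₀def, mz_expand, hzx, hzn]
    linear_combination hca1
  -- pseudo-orthonormality
  have h00 : mink f₀ f₀ = 1 := by
    rw [hf₀def, mink_smul_left, mink_smul_right, ← mul_assoc, hs0, ← hg₁def]
    field_simp
  have h11 : mink f₁ f₁ = 1 := by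
    rw [hf₁def, mink_smul_left, mink_smul_right, ← mul_assoc, hs1, hzz]
    field_simp
  have h22 : mink f₂ f₂ = 1 := by
    rw [hf₂def, mink_smul_left, mink_smul_right, ← mul_assoc, hs2, ← hg₂def]
    field_simp
  have h33 : mink f₃ f₃ = -1 := by
    rw [hf₃def, mink_smul_left, mink_smul_right, ← mul_assoc, hs3, hww]
    rw [show c^2 - 1 = -(1 - c^2) by ring]
    field_simp
  have h01 : mink f₀ f₁ = 0 := by
    rw [hf₀def, hf₁def, mink_smul_left, mink_smul_right, S.mX1_z hp₀]; ring
  have h02 : mink f₀ f₂ = 0 := by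
    rw [hf₀def, hf₂def, mink_smul_left, mink_smul_right, S.g12 hp₀]; ring
  have h03 : mink f₀ f₃ = 0 := by
    rw [hf₀def, hf₃def, mink_smul_left, mink_smul_right, hX1w]; ring
  have h12 : mink f₁ f₂ = 0 := by
    rw [hf₁def, hf₂def, mink_smul_left, mink_smul_right, mink_comm z₀, hX2z]; ring
  have h13 : mink f₁ f₃ = 0 := by
    rw [hf₁def, hf₃def, mink_smul_left, mink_smul_right, hzw]; ring
  have hX2w : mink (Xf x v₂ p₀) w₀ = 0 := S.symm.mX1_z hp₀
  have h23 : mink f₂ f₃ = 0 := by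
    rw [hf₂def, hf₃def, mink_smul_left, mink_smul_right, hX2w]; ring
  -- the isometry and the radius
  refine ⟨buildA f₀ f₁ f₂ f₃,
    buildA_preserves h00 h11 h22 h33 h01 h02 h03 h12 h13 h23, |a|⁻¹, hrpos, hrlt1, ?_⟩
  intro p hp
  constructor
  · -- circle part
    have hFc := S.Fconst hconn hac1 ha2 (x p) hp₀ hp
    have hFv := S.Fval hp
    have e0 : buildA f₀ f₁ f₂ f₃ (x p) 0 ^ 2
        = mink (x p) (Xf x v₁ p₀) * mink (x p) (Xf x v₁ p₀) * g₁⁻¹ := by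
      rw [buildA_apply0, hf₀def, mink_smul_right, ← hs0]; ring
    have e1 : buildA f₀ f₁ f₂ f₃ (x p) 1 ^ 2
        = mink (x p) z₀ * mink (x p) z₀ * (a^2 - 1)⁻¹ := by
      rw [buildA_apply1, hf₁def, mink_smul_right, ← hs1]; ring
    rw [e0, e1, hg₁def, hz₀def, hFc, hFv, hsq, hr2]
    exact hcircle
  · -- hyperbola part
    have hFc := S.symm.Fconst hconn hca1 hc2' (x p) hp₀ hp
    have hFv := S.symm.Fval hp
    have e2 : buildA f₀ f₁ f₂ f₃ (x p) 2 ^ 2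
        = mink (x p) (Xf x v₂ p₀) * mink (x p) (Xf x v₂ p₀) * g₂⁻¹ := by
      rw [buildA_apply2, hf₂def, mink_smul_right, ← hs2]; ring
    have e3 : buildA f₀ f₁ f₂ f₃ (x p) 3 ^ 2
        = -(mink (x p) w₀ * mink (x p) w₀ * (c^2 - 1)⁻¹) := by
      rw [buildA_apply3, hf₃def, mink_smul_right,
        show (c^2 - 1 : ℝ) = -(1 - c^2) by ring, inv_neg, ← hs3]
      ring
    rw [e2, e3, sub_neg_eq_add, hg₂def, hw₀def, hFc, hFv, hsq, hr2]
    exact hhyper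

end Setup

end IsoparametricH3

open IsoparametricH3

open Real in
/-- **Classification of nonumbilic isoparametric surfaces in H³.**
A nonumbilic isoparametric immersion into the hyperboloid model
`H³ = {x : ⟨x,x⟩ = -1, x₄ > 0} ⊂ ℝ^{3,1}` with distinct constant principal
curvatures `a ≠ c` satisfies `a * c - 1 = 0`, and up to a linear Minkowski isometry
of `ℝ^{3,1}` its image lies on a circular hyperboloid
`S¹(r/b) × H¹(1/b) ⊂ H³` with `b = √(1 - r²)`, for some `0 < r < 1`. -/
theorem isoparametric_H3_hyperboloid
    (U : Set (EuclideanSpace ℝ (Fin 2))) (hUne : U.Nonempty) (hUopen : IsOpen U)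
    (hUconn : IsConnected U)
    (x n : EuclideanSpace ℝ (Fin 2) → EuclideanSpace ℝ (Fin 4))
    (hx : ContDiffOn ℝ (⊤ : ℕ∞) x U) (hn : ContDiffOn ℝ (⊤ : ℕ∞) n U)
    (hhyp : ∀ p ∈ U, mink (x p) (x p) = -1 ∧ 0 < x p 3)
    (himm : ∀ p ∈ U, Function.Injective (fderiv ℝ x p))
    (hunit : ∀ p ∈ U, mink (n p) (n p) = 1)
    (htang : ∀ p ∈ U, mink (n p) (x p) = 0)
    (hnormal : ∀ p ∈ U, ∀ v, mink (n p) (fderiv ℝ x p v) = 0)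
    (a c : ℝ) (hac : a ≠ c)
    (v₁ v₂ : EuclideanSpace ℝ (Fin 2) → EuclideanSpace ℝ (Fin 2))
    (hv₁ : ContDiffOn ℝ (⊤ : ℕ∞) v₁ U) (hv₂ : ContDiffOn ℝ (⊤ : ℕ∞) v₂ U)
    (hindep : ∀ p ∈ U, LinearIndependent ℝ ![v₁ p, v₂ p])
    (hW₁ : ∀ p ∈ U, fderiv ℝ n p (v₁ p) = (-a) • fderiv ℝ x p (v₁ p))
    (hW₂ : ∀ p ∈ U, fderiv ℝ n p (v₂ p) = (-c) • fderiv ℝ x p (v₂ p)) :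
    a * c - 1 = 0 ∧
      ∃ (A : EuclideanSpace ℝ (Fin 4) →ₗ[ℝ] EuclideanSpace ℝ (Fin 4)),
        (∀ u v, mink (A u) (A v) = mink u v) ∧
        ∃ r : ℝ, 0 < r ∧ r < 1 ∧
          ∀ p ∈ U,
            (A (x p) 0) ^ 2 + (A (x p) 1) ^ 2 = r ^ 2 / Real.sqrt (1 - r ^ 2) ^ 2 ∧
            (A (x p) 2) ^ 2 - (A (x p) 3) ^ 2 = -(1 / Real.sqrt (1 - r ^ 2) ^ 2) := by
  classical
  have S : Setup U x n v₁ v₂ a c :=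
    ⟨hUopen, hx, hn, hv₁, hv₂, fun p hp => (hhyp p hp).1, fun p hp => (hhyp p hp).2, himm,
      hunit, htang, hnormal, hac, hindep, hW₁, hW₂⟩
  obtain ⟨p₀, hp₀⟩ := hUne
  have hac1 : a * c = 1 := S.gauss hp₀
  have ha0 : a ≠ 0 := by intro h; rw [h] at hac1; simp at hac1
  refine ⟨by linarith, ?_⟩
  have hconn : IsPreconnected U := hUconn.isPreconnected
  have hA2ne1 : a ^ 2 ≠ 1 := by
    intro h
    have haa : a * a = 1 := by nlinarith
    exact hac (mul_left_cancel₀ ha0 (haa.trans hac1.symm))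
  by_cases hgt : 1 < a ^ 2
  · exact S.main hconn ⟨p₀, hp₀⟩ hac1 hgt
  · have hlt : a ^ 2 < 1 := lt_of_le_of_ne (not_lt.mp hgt) hA2ne1
    have hA2pos : 0 < a ^ 2 := by positivity
    have hcc : a ^ 2 * c ^ 2 = 1 := by nlinarith
    have hc2 : 1 < c ^ 2 := by nlinarith
    exact S.symm.main hconn ⟨p₀, hp₀⟩ (by rw [mul_comm]; exact hac1) hc2
end

section
/- (Cartan–Darboux congruence theorem, matrix group version.) Let U ⊆ ℝᵐ be a nonempty open connected set and let e, ẽ : U → Matrix (Fin n) (Fin n) ℝ be smooth maps whose values are invertible matrices. If the pulled-back Maurer–Cartan forms agree, i.e., (e(x))⁻¹ * D e_x(v) = (ẽ(x))⁻¹ * D ẽ_x(v) for every x ∈ U and v ∈ ℝᵐ, then there exists an invertible matrix g such that ẽ(x) = g * e(x) for all x ∈ U. -/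
attribute [local instance] Matrix.normedAddCommGroup Matrix.normedSpace

noncomputable section CartanDarbouxAux

open Matrix

variable {n : ℕ}

/-- The entry map as a continuous linear map. -/
def matrixEntryCLM (i j : Fin n) : Matrix (Fin n) (Fin n) ℝ →L[ℝ] ℝ :=
  LinearMap.toContinuousLinearMap
    { toFun := fun A => A i j
      map_add' := fun _ _ => rfl
      map_smul' := fun _ _ => rfl }

lemma contDiff_matrixEntry (i j : Fin n) :
    ContDiff ℝ (⊤ : ℕ∞) (fun A : Matrix (Fin n) (Fin n) ℝ => A i j) :=
  (matrixEntryCLM i j).contDiff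

lemma contDiff_matrixDet :
    ContDiff ℝ (⊤ : ℕ∞) (fun A : Matrix (Fin n) (Fin n) ℝ => A.det) := by
  simp only [Matrix.det_apply']
  exact ContDiff.sum fun σ _ =>
    contDiff_const.mul (contDiff_prod fun i _ => contDiff_matrixEntry _ _)

lemma contDiff_matrixUpdateRow (j : Fin n) (c : Fin n → ℝ) :
    ContDiff ℝ (⊤ : ℕ∞) (fun A : Matrix (Fin n) (Fin n) ℝ => A.updateRow j c) := by
  apply contDiff_pi.2
  intro i
  rcases eq_or_ne i j with rfl | hij
  · simp only [Matrix.updateRow_self]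
    exact contDiff_const
  · simp only [Matrix.updateRow_ne hij]
    exact contDiff_pi.2 fun k => contDiff_matrixEntry i k

lemma contDiff_matrixAdjugate :
    ContDiff ℝ (⊤ : ℕ∞) (fun A : Matrix (Fin n) (Fin n) ℝ => A.adjugate) := by
  apply contDiff_pi.2
  intro i
  apply contDiff_pi.2
  intro j
  simp only [Matrix.adjugate_apply]
  exact contDiff_matrixDet.comp (contDiff_matrixUpdateRow j (Pi.single i 1))

/-- Matrix multiplication as a continuous bilinear map. -/
def matrixMulCLM :
    Matrix (Fin n) (Fin n) ℝ →L[ℝ] Matrix (Fin n) (Fin n) ℝ →L[ℝ] Matrix (Fin n) (Fin n) ℝ :=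
  LinearMap.toContinuousLinearMap
    { toFun := fun A => LinearMap.toContinuousLinearMap (LinearMap.mulLeft ℝ A)
      map_add' := fun A B => by ext C; simp [add_mul]
      map_smul' := fun r A => by ext C; simp [Matrix.smul_mul]}

@[simp] lemma matrixMulCLM_apply (A B : Matrix (Fin n) (Fin n) ℝ) :
    matrixMulCLM A B = A * B := rfl

end CartanDarbouxAux

/-- **Cartan–Darboux congruence theorem (matrix group version).**
If two smooth invertible-matrix-valued maps on a nonempty open connected set
have the same pulled-back Maurer–Cartan form `e⁻¹ de`, then they differ by left
multiplication by a constant invertible matrix. -/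
theorem cartan_darboux_congruence
    (m n : ℕ) (U : Set (EuclideanSpace ℝ (Fin m)))
    (hUne : U.Nonempty) (hUopen : IsOpen U) (hUconn : IsConnected U)
    (e e' : EuclideanSpace ℝ (Fin m) → Matrix (Fin n) (Fin n) ℝ)
    (he : ContDiffOn ℝ (⊤ : ℕ∞) e U) (he' : ContDiffOn ℝ (⊤ : ℕ∞) e' U)
    (hinv : ∀ x ∈ U, IsUnit (e x)) (hinv₂ : ∀ x ∈ U, IsUnit (e' x))
    (hMC : ∀ x ∈ U, ∀ v, (e x)⁻¹ * fderiv ℝ e x v = (e' x)⁻¹ * fderiv ℝ e' x v) :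
    ∃ g : Matrix (Fin n) (Fin n) ℝ, IsUnit g ∧ ∀ x ∈ U, e' x = g * e x := by
  classical
  set f : EuclideanSpace ℝ (Fin m) → Matrix (Fin n) (Fin n) ℝ :=
    fun x => e' x * (e x)⁻¹ with hf_def
  -- differentiability of e, e' at points of U
  have heD : ∀ x ∈ U, DifferentiableAt ℝ e x := fun x hx =>
    (he.contDiffAt (hUopen.mem_nhds hx)).differentiableAt (by simp)
  have heD' : ∀ x ∈ U, DifferentiableAt ℝ e' x := fun x hx =>
    (he'.contDiffAt (hUopen.mem_nhds hx)).differentiableAt (by simp)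
  have hdet : ∀ x ∈ U, (e x).det ≠ 0 := fun x hx => by
    have := (Matrix.isUnit_iff_isUnit_det _).1 (hinv x hx)
    exact IsUnit.ne_zero this
  -- differentiability of the inverse of e on U
  have hinvD : ∀ x ∈ U, DifferentiableAt ℝ (fun y => (e y)⁻¹) x := by
    intro x hx
    have : (fun y => (e y)⁻¹) =
        fun y => ((e y).det)⁻¹ • (e y).adjugate := by
      funext y
      rw [Matrix.inv_def, Ring.inverse_eq_inv']
    rw [this]
    have h1 : DifferentiableAt ℝ (fun y => ((e y).det)⁻¹) x := by
      have := (contDiff_matrixDet.differentiable (by simp) (e x)).comp x (heD x hx)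
      exact this.inv (hdet x hx)
    have h2 : DifferentiableAt ℝ (fun y => (e y).adjugate) x :=
      (contDiff_matrixAdjugate.differentiable (by simp) (e x)).comp x (heD x hx)
    exact h1.smul h2
  have hfD : ∀ x ∈ U, DifferentiableAt ℝ f x := fun x hx => by
    have : DifferentiableAt ℝ
        (fun y => matrixMulCLM (e' y) ((e y)⁻¹)) x :=
      DifferentiableAt.clm_apply
        ((matrixMulCLM.differentiable.differentiableAt).comp x (heD' x hx)) (hinvD x hx)
    simpa [hf_def] using this
  -- the derivative of f vanishes on U
  have hfderiv : ∀ x ∈ U, fderiv ℝ f x = 0 := by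
    intro x hx
    have hF := (hfD x hx).hasFDerivAt
    have hE := (heD x hx).hasFDerivAt
    -- e' = f * e on a neighborhood of x
    have heq : e' =ᶠ[nhds x] fun y => matrixMulCLM (f y) (e y) := by
      filter_upwards [hUopen.mem_nhds hx] with y hy
      have hyd : IsUnit (e y).det := (Matrix.isUnit_iff_isUnit_det _).1 (hinv y hy)
      simp only [matrixMulCLM_apply, hf_def, Matrix.mul_assoc,
        Matrix.nonsing_inv_mul _ hyd, Matrix.mul_one]
    have hprod :
        HasFDerivAt (fun y => matrixMulCLM (f y) (e y))
          ((matrixMulCLM.precompR _ (f x) (fderiv ℝ e x)) +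
            (matrixMulCLM.precompL _ (fderiv ℝ f x) (e x))) x :=
      matrixMulCLM.hasFDerivAt_of_bilinear hF hE
    have he'deriv : HasFDerivAt e'
          ((matrixMulCLM.precompR _ (f x) (fderiv ℝ e x)) +
            (matrixMulCLM.precompL _ (fderiv ℝ f x) (e x))) x :=
      hprod.congr_of_eventuallyEq heq
    have hfd' : fderiv ℝ e' x =
        (matrixMulCLM.precompR _ (f x) (fderiv ℝ e x)) +
          (matrixMulCLM.precompL _ (fderiv ℝ f x) (e x)) := he'deriv.fderiv
    -- from the Maurer–Cartan hypothesis
    have hdet' : IsUnit (e' x).det := (Matrix.isUnit_iff_isUnit_det _).1 (hinv₂ x hx)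
    have hMCx : ∀ v, fderiv ℝ e' x v = f x * fderiv ℝ e x v := by
      intro v
      have := congrArg (fun A => e' x * A) (hMC x hx v)
      simp only [← Matrix.mul_assoc, Matrix.mul_nonsing_inv _ hdet',
        Matrix.one_mul] at this
      rw [← this, hf_def, Matrix.mul_assoc]
    ext v : 1
    have := ContinuousLinearMap.ext_iff.mp hfd' v
    simp only [ContinuousLinearMap.add_apply, ContinuousLinearMap.precompR_apply,
      ContinuousLinearMap.precompL_apply, ContinuousLinearMap.comp_apply,
      ContinuousLinearMap.flip_apply, matrixMulCLM_apply, hMCx v] at this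
    have hzero : fderiv ℝ f x v * e x = 0 := by
      have h := this
      nth_rewrite 1 [show f x * fderiv ℝ e x v =
        f x * fderiv ℝ e x v + 0 by rw [add_zero]] at h
      exact (add_left_cancel h).symm
    have : fderiv ℝ f x v * e x * (e x)⁻¹ = 0 := by rw [hzero, Matrix.zero_mul]
    rw [Matrix.mul_assoc, Matrix.mul_nonsing_inv _ ((Matrix.isUnit_iff_isUnit_det _).1
      (hinv x hx)), Matrix.mul_one] at this
    simpa using this
  -- f is locally constant on U
  have hloc : ∀ x ∈ U, ∃ ε > 0, Metric.ball x ε ⊆ U ∧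
      ∀ y ∈ Metric.ball x ε, f y = f x := by
    intro x hx
    obtain ⟨ε, hε, hball⟩ := Metric.isOpen_iff.1 hUopen x hx
    refine ⟨ε, hε, hball, fun y hy => ?_⟩
    have hconv : Convex ℝ (Metric.ball x ε) := convex_ball x ε
    refine hconv.is_const_of_fderivWithin_eq_zero
      (fun z hz => (hfD z (hball hz)).differentiableWithinAt) ?_ hy (Metric.mem_ball_self hε)
    intro z hz
    rw [fderivWithin_of_isOpen Metric.isOpen_ball hz]
    exact hfderiv z (hball hz)
  -- local constancy + connectedness ⇒ f constant on U
  obtain ⟨x₀, hx₀⟩ := hUne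
  have hconst : ∀ x ∈ U, f x = f x₀ := by
    intro x hx
    set S : Set (EuclideanSpace ℝ (Fin m)) :=
      {y | ∃ ε > 0, Metric.ball y ε ⊆ U ∧ ∀ z ∈ Metric.ball y ε, f z = f x₀} with hS_def
    set T : Set (EuclideanSpace ℝ (Fin m)) :=
      {y | ∃ ε > 0, Metric.ball y ε ⊆ U ∧ ∀ z ∈ Metric.ball y ε, f z ≠ f x₀} with hT_def
    have hSopen : IsOpen S := by
      apply Metric.isOpen_iff.2
      rintro y ⟨ε, hε, hb, hc⟩
      refine ⟨ε, hε, fun z hz => ?_⟩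
      obtain ⟨δ, hδ, hδb⟩ := Metric.isOpen_iff.1 Metric.isOpen_ball z hz
      exact ⟨δ, hδ, fun w hw => hb (hδb hw), fun w hw => hc w (hδb hw)⟩
    have hTopen : IsOpen T := by
      apply Metric.isOpen_iff.2
      rintro y ⟨ε, hε, hb, hc⟩
      refine ⟨ε, hε, fun z hz => ?_⟩
      obtain ⟨δ, hδ, hδb⟩ := Metric.isOpen_iff.1 Metric.isOpen_ball z hz
      exact ⟨δ, hδ, fun w hw => hb (hδb hw), fun w hw => hc w (hδb hw)⟩
    have hcover : U ⊆ S ∪ T := by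
      intro y hy
      obtain ⟨ε, hε, hb, hc⟩ := hloc y hy
      rcases eq_or_ne (f y) (f x₀) with h | h
      · exact Or.inl ⟨ε, hε, hb, fun z hz => (hc z hz).trans h⟩
      · exact Or.inr ⟨ε, hε, hb, fun z hz => (hc z hz).trans_ne h⟩
    have hSne : (U ∩ S).Nonempty := by
      obtain ⟨ε, hε, hb, hc⟩ := hloc x₀ hx₀
      exact ⟨x₀, hx₀, ⟨ε, hε, hb, hc⟩⟩
    by_contra hne
    have hTx : x ∈ U ∩ T := by
      obtain ⟨ε, hε, hb, hc⟩ := hloc x hx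
      exact ⟨hx, ⟨ε, hε, hb, fun z hz => (hc z hz).trans_ne hne⟩⟩
    obtain ⟨y, hyU, hyS, hyT⟩ :=
      hUconn.isPreconnected S T hSopen hTopen hcover hSne ⟨x, hTx⟩
    obtain ⟨ε₁, hε₁, _, hc₁⟩ := hyS
    obtain ⟨ε₂, hε₂, _, hc₂⟩ := hyT
    exact hc₂ y (Metric.mem_ball_self hε₂) (hc₁ y (Metric.mem_ball_self hε₁))
  -- conclude
  refine ⟨f x₀, ?_, fun x hx => ?_⟩
  · have h1 : IsUnit (e' x₀) := hinv₂ x₀ hx₀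
    have h2 : IsUnit ((e x₀)⁻¹) := by
      rw [Matrix.isUnit_nonsing_inv_iff]
      exact hinv x₀ hx₀
    exact h1.mul h2
  · have hyd : IsUnit (e x).det := (Matrix.isUnit_iff_isUnit_det _).1 (hinv x hx)
    rw [← hconst x hx, hf_def]
    rw [Matrix.mul_assoc, Matrix.nonsing_inv_mul _ hyd, Matrix.mul_one]
end

section
/- Let U ⊆ ℝ² be a nonempty open connected set, x : U → ℝ³ a smooth immersion, and n : U → ℝ³ a smooth unit normal field along x (‖n(p)‖ = 1 and ⟨n(p), Dx_p(v)⟩ = 0 for all p, v). Suppose x is totally umbilic: there is a smooth function a : U → ℝ such that Dn_p(v) = −a(p) • Dx_p(v) for all p ∈ U and all v ∈ ℝ². Then a is constant on U, and either a = 0 and x(U) lies in an affine plane of ℝ³, or a ≠ 0 and x(U) lies in a sphere of radius 1/|a| (namely the sphere of radius 1/|a| centered at x(p) + (1/a) n(p), which is independent of p). -/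
open scoped RealInnerProductSpace

open Set Filter Topology

private lemma const_of_hasFDerivAt_zero {E F : Type*} [NormedAddCommGroup E] [NormedSpace ℝ E]
    [NormedAddCommGroup F] [NormedSpace ℝ F] {f : E → F} {U : Set E}
    (hUopen : IsOpen U) (hUconn : IsPreconnected U)
    (hder : ∀ p ∈ U, HasFDerivAt f (0 : E →L[ℝ] F) p) :
    ∀ p ∈ U, ∀ q ∈ U, f p = f q := by
  have key : ∀ r ∈ U, ∀ᶠ s in 𝓝 r, f s = f r := by
    intro r hr
    obtain ⟨ε, hε, hball⟩ := Metric.isOpen_iff.1 hUopen r hr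
    filter_upwards [Metric.ball_mem_nhds r hε] with s hs
    refine (convex_ball r ε).is_const_of_fderivWithin_eq_zero
      (fun z hz => ((hder z (hball hz)).differentiableAt).differentiableWithinAt)
      (fun z hz => ?_) hs (Metric.mem_ball_self hε)
    rw [fderivWithin_of_isOpen Metric.isOpen_ball hz, (hder z (hball hz)).fderiv]
  intro p hp q hq
  have hSopen : IsOpen {z | z ∈ U ∧ f z = f p} := by
    rw [isOpen_iff_mem_nhds]
    rintro z ⟨hzU, hzf⟩
    filter_upwards [hUopen.mem_nhds hzU, key z hzU] with w hwU hwf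
    exact ⟨hwU, hwf.trans hzf⟩
  have hTopen : IsOpen {z | z ∈ U ∧ f z ≠ f p} := by
    rw [isOpen_iff_mem_nhds]
    rintro z ⟨hzU, hzf⟩
    filter_upwards [hUopen.mem_nhds hzU, key z hzU] with w hwU hwf
    exact ⟨hwU, by rw [hwf]; exact hzf⟩
  have hdisj : Disjoint {z | z ∈ U ∧ f z = f p} {z | z ∈ U ∧ f z ≠ f p} := by
    rw [Set.disjoint_left]
    rintro z ⟨_, h1⟩ ⟨_, h2⟩
    exact h2 h1
  have hsub : U ⊆ {z | z ∈ U ∧ f z = f p} ∪ {z | z ∈ U ∧ f z ≠ f p} := fun z hz => by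
    by_cases h : f z = f p
    · exact Or.inl ⟨hz, h⟩
    · exact Or.inr ⟨hz, h⟩
  have := hUconn.subset_left_of_subset_union hSopen hTopen hdisj hsub ⟨p, hp, hp, rfl⟩
  exact ((this hq).2).symm

set_option maxHeartbeats 1000000 in
/-- **Classification of totally umbilic surfaces in ℝ³.**
If `x : U → ℝ³` is a totally umbilic immersion (`Dn = -a • Dx` for a scalar
function `a`), then `a` is constant, and either `a = 0` and `x(U)` lies in an
affine plane, or `a ≠ 0` and `x(U)` lies in the sphere of radius `1/|a|` centered
at `x p + (1/a) • n p`, a point independent of `p`. -/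
theorem totally_umbilic_plane_or_sphere
    (U : Set (EuclideanSpace ℝ (Fin 2))) (hUne : U.Nonempty) (hUopen : IsOpen U)
    (hUconn : IsConnected U)
    (x n : EuclideanSpace ℝ (Fin 2) → EuclideanSpace ℝ (Fin 3))
    (hx : ContDiffOn ℝ (⊤ : ℕ∞) x U) (hn : ContDiffOn ℝ (⊤ : ℕ∞) n U)
    (himm : ∀ p ∈ U, Function.Injective (fderiv ℝ x p))
    (hunit : ∀ p ∈ U, ‖n p‖ = 1)
    (hnormal : ∀ p ∈ U, ∀ v, ⟪n p, fderiv ℝ x p v⟫ = 0)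
    (a : EuclideanSpace ℝ (Fin 2) → ℝ) (ha : ContDiffOn ℝ (⊤ : ℕ∞) a U)
    (humb : ∀ p ∈ U, ∀ v, fderiv ℝ n p v = (-(a p)) • fderiv ℝ x p v) :
    ∃ a₀ : ℝ, (∀ p ∈ U, a p = a₀) ∧
      ((a₀ = 0 ∧ ∃ (q w : EuclideanSpace ℝ (Fin 3)), ‖w‖ = 1 ∧
          ∀ p ∈ U, ⟪x p - q, w⟫ = 0) ∨
       (a₀ ≠ 0 ∧ ∃ q : EuclideanSpace ℝ (Fin 3),
          (∀ p ∈ U, x p + a₀⁻¹ • n p = q) ∧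
          ∀ p ∈ U, ‖x p - q‖ = 1 / |a₀|)) := by
  obtain ⟨p₀, hp₀⟩ := hUne
  -- differentiability facts
  have hxd : ∀ p ∈ U, DifferentiableAt ℝ x p := fun p hp =>
    (hx.contDiffAt (hUopen.mem_nhds hp)).differentiableAt (by simp)
  have hnd : ∀ p ∈ U, DifferentiableAt ℝ n p := fun p hp =>
    (hn.contDiffAt (hUopen.mem_nhds hp)).differentiableAt (by simp)
  have had : ∀ p ∈ U, DifferentiableAt ℝ a p := fun p hp =>
    (ha.contDiffAt (hUopen.mem_nhds hp)).differentiableAt (by simp)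
  -- Step 1 : the derivative of `a` vanishes on `U`.
  have hda : ∀ p ∈ U, fderiv ℝ a p = 0 := by
    intro p hp
    have hmem := hUopen.mem_nhds hp
    have hxp : ContDiffAt ℝ (⊤ : ℕ∞) x p := hx.contDiffAt hmem
    have hnp : ContDiffAt ℝ (⊤ : ℕ∞) n p := hn.contDiffAt hmem
    have hXd : DifferentiableAt ℝ (fderiv ℝ x) p :=
      (hxp.fderiv_right (m := 1) (WithTop.coe_le_coe.mpr le_top)).differentiableAt one_ne_zero
    have hev : (fun q => fderiv ℝ n q) =ᶠ[𝓝 p] fun q => (-(a q)) • fderiv ℝ x q := by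
      filter_upwards [hmem] with q hq
      exact ContinuousLinearMap.ext (humb q hq)
    have hsm : HasFDerivAt (fun q => (-(a q)) • fderiv ℝ x q)
        ((-(a p)) • (fderiv ℝ (fderiv ℝ x) p) +
          (-(fderiv ℝ a p)).smulRight (fderiv ℝ x p)) p :=
      ((had p hp).hasFDerivAt.neg).smul hXd.hasFDerivAt
    have hN'' : fderiv ℝ (fderiv ℝ n) p = (-(a p)) • (fderiv ℝ (fderiv ℝ x) p) +
        (-(fderiv ℝ a p)).smulRight (fderiv ℝ x p) := by
      rw [hev.fderiv_eq]; exact hsm.fderiv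
    have hsymn := hnp.isSymmSndFDerivAt (by simp; exact WithTop.coe_le_coe.mpr (le_top : (2:ℕ∞) ≤ ⊤))
    have hsymx := hxp.isSymmSndFDerivAt (by simp; exact WithTop.coe_le_coe.mpr (le_top : (2:ℕ∞) ≤ ⊤))
    have key : ∀ v w, (fderiv ℝ a p v) • fderiv ℝ x p w
        = (fderiv ℝ a p w) • fderiv ℝ x p v := by
      intro v w
      have h1 := hsymn v w
      rw [hN''] at h1
      simp only [ContinuousLinearMap.add_apply, ContinuousLinearMap.smul_apply,
        ContinuousLinearMap.smulRight_apply, ContinuousLinearMap.neg_apply, neg_smul] at h1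
      rw [hsymx v w] at h1
      have := add_left_cancel h1
      exact neg_injective this
    -- linear independence of the images of the basis vectors
    set e₀ : EuclideanSpace ℝ (Fin 2) := EuclideanSpace.single 0 1 with he₀
    set e₁ : EuclideanSpace ℝ (Fin 2) := EuclideanSpace.single 1 1 with he₁
    have hk := key e₀ e₁
    have himg : fderiv ℝ x p ((fderiv ℝ a p e₁) • e₀ - (fderiv ℝ a p e₀) • e₁) = 0 := by
      rw [map_sub, map_smul, map_smul, hk]
      abel
    have hker : (fderiv ℝ a p e₁) • e₀ - (fderiv ℝ a p e₀) • e₁ = 0 := by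
      apply himm p hp
      rw [himg, map_zero]
    have h₀ : fderiv ℝ a p e₀ = 0 := by
      have := congrArg (fun z : EuclideanSpace ℝ (Fin 2) => z 1) hker
      simpa [he₀, he₁, EuclideanSpace.single_apply] using this
    have h₁ : fderiv ℝ a p e₁ = 0 := by
      have := congrArg (fun z : EuclideanSpace ℝ (Fin 2) => z 0) hker
      simpa [he₀, he₁, EuclideanSpace.single_apply] using this
    apply ContinuousLinearMap.ext
    intro v
    have hv : v = v 0 • e₀ + v 1 • e₁ := by
      refine PiLp.ext fun j => ?_
      fin_cases j <;> simp [he₀, he₁, EuclideanSpace.single_apply]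
    rw [hv, map_add, map_smul, map_smul, h₀, h₁]
    simp
  -- Step 2 : `a` is constant on `U`.
  have hader : ∀ p ∈ U, HasFDerivAt a 0 p := fun p hp =>
    hda p hp ▸ (had p hp).hasFDerivAt
  have haconst : ∀ p ∈ U, a p = a p₀ := fun p hp =>
    const_of_hasFDerivAt_zero hUopen hUconn.isPreconnected hader p hp p₀ hp₀
  refine ⟨a p₀, haconst, ?_⟩
  by_cases h0 : a p₀ = 0
  · -- planar case
    left
    refine ⟨h0, x p₀, n p₀, hunit p₀ hp₀, ?_⟩
    -- `n` is constant on `U`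
    have hnder : ∀ p ∈ U, HasFDerivAt n
        (0 : EuclideanSpace ℝ (Fin 2) →L[ℝ] EuclideanSpace ℝ (Fin 3)) p := by
      intro p hp
      have : fderiv ℝ n p = 0 := by
        apply ContinuousLinearMap.ext
        intro v
        rw [humb p hp v, haconst p hp, h0]
        simp
      have h := (hnd p hp).hasFDerivAt
      rwa [this] at h
    have hnconst : ∀ p ∈ U, n p = n p₀ := fun p hp =>
      const_of_hasFDerivAt_zero hUopen hUconn.isPreconnected hnder p hp p₀ hp₀
    -- the function `p ↦ ⟪n p₀, x p - x p₀⟫` has vanishing derivative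
    have hgder : ∀ p ∈ U, HasFDerivAt (fun q => ⟪n p₀, x q - x p₀⟫)
        (0 : EuclideanSpace ℝ (Fin 2) →L[ℝ] ℝ) p := by
      intro p hp
      have h1 : HasFDerivAt (fun q => x q - x p₀) (fderiv ℝ x p) p :=
        (hxd p hp).hasFDerivAt.sub_const (x p₀)
      have h2 := ((innerSL ℝ (n p₀)).hasFDerivAt).comp p h1
      have h3 : (innerSL ℝ (n p₀)).comp (fderiv ℝ x p) = 0 := by
        apply ContinuousLinearMap.ext
        intro v
        simp only [ContinuousLinearMap.coe_comp', Function.comp_apply, innerSL_apply_apply,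
          ContinuousLinearMap.zero_apply]
        rw [← hnconst p hp]
        exact hnormal p hp v
      rwa [h3] at h2
    have hgconst := const_of_hasFDerivAt_zero hUopen hUconn.isPreconnected hgder
    intro p hp
    rw [real_inner_comm]
    calc ⟪n p₀, x p - x p₀⟫ = ⟪n p₀, x p₀ - x p₀⟫ := hgconst p hp p₀ hp₀
      _ = 0 := by simp
  · -- spherical case
    right
    refine ⟨h0, x p₀ + (a p₀)⁻¹ • n p₀, ?_, ?_⟩
    · -- the center map is constant
      have hcder : ∀ p ∈ U, HasFDerivAt (fun q => x q + (a p₀)⁻¹ • n q)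
          (0 : EuclideanSpace ℝ (Fin 2) →L[ℝ] EuclideanSpace ℝ (Fin 3)) p := by
        intro p hp
        have h1 : HasFDerivAt (fun q => x q + (a p₀)⁻¹ • n q)
            (fderiv ℝ x p + (a p₀)⁻¹ • fderiv ℝ n p) p :=
          (hxd p hp).hasFDerivAt.add ((hnd p hp).hasFDerivAt.const_smul (a p₀)⁻¹)
        have h2 : fderiv ℝ x p + (a p₀)⁻¹ • fderiv ℝ n p = 0 := by
          apply ContinuousLinearMap.ext
          intro v
          simp only [ContinuousLinearMap.add_apply, ContinuousLinearMap.smul_apply,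
            ContinuousLinearMap.zero_apply]
          rw [humb p hp v, haconst p hp, smul_smul]
          have hone : (a p₀)⁻¹ * -a p₀ = -1 := by field_simp
          rw [hone]
          simp
        rwa [h2] at h1
      exact fun p hp =>
        const_of_hasFDerivAt_zero hUopen hUconn.isPreconnected hcder p hp p₀ hp₀
    · intro p hp
      have hc : x p + (a p₀)⁻¹ • n p = x p₀ + (a p₀)⁻¹ • n p₀ :=
        const_of_hasFDerivAt_zero hUopen hUconn.isPreconnected
          (by
            intro r hr
            have h1 : HasFDerivAt (fun q => x q + (a p₀)⁻¹ • n q)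
                (fderiv ℝ x r + (a p₀)⁻¹ • fderiv ℝ n r) r :=
              (hxd r hr).hasFDerivAt.add ((hnd r hr).hasFDerivAt.const_smul (a p₀)⁻¹)
            have h2 : fderiv ℝ x r + (a p₀)⁻¹ • fderiv ℝ n r = 0 := by
              apply ContinuousLinearMap.ext
              intro v
              simp only [ContinuousLinearMap.add_apply, ContinuousLinearMap.smul_apply,
                ContinuousLinearMap.zero_apply]
              rw [humb r hr v, haconst r hr, smul_smul]
              have hone : (a p₀)⁻¹ * -a p₀ = -1 := by field_simp
              rw [hone]
              simp
            rwa [h2] at h1) p hp p₀ hp₀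
      have : x p - (x p₀ + (a p₀)⁻¹ • n p₀) = -((a p₀)⁻¹ • n p) := by
        rw [← hc]; abel
      rw [this, norm_neg, norm_smul, hunit p hp, Real.norm_eq_abs, abs_inv, mul_one, one_div]
end
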